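/- arXiv:2110.01936 — 6 statements merged into one kernel-verified Lean document; each statement's English description precedes it below -/
import Mathlib

section
/- For every fixed integer t, the property 'the connected graph G has treedepth at most t' admits a local certification scheme with certificates of size O(t log n) bits. -/
/-! ### First-order logic on graphs -/

/-- First-order formulas in the language of graphs (equality and one binary
adjacency relation), with free variables among `Fin n`. -/
inductive GraphFormula : ℕ → Type where
  | eq : ∀ {n : ℕ}, Fin n → Fin n → GraphFormula n
  | adj : ∀ {n : ℕ}, Fin n → Fin n → GraphFormula n
  | not : ∀ {n : ℕ}, GraphFormula n → GraphFormula n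
  | and : ∀ {n : ℕ}, GraphFormula n → GraphFormula n → GraphFormula n
  | or : ∀ {n : ℕ}, GraphFormula n → GraphFormula n → GraphFormula n
  | all : ∀ {n : ℕ}, GraphFormula (n + 1) → GraphFormula n
  | ex : ∀ {n : ℕ}, GraphFormula (n + 1) → GraphFormula n

namespace GraphFormula

/-- Quantifier depth of a formula: the maximum number of nested quantifiers. -/
def qdepth : ∀ {n : ℕ}, GraphFormula n → ℕ
  | _, .eq _ _ => 0
  | _, .adj _ _ => 0
  | _, .not f => qdepth f
  | _, .and f g => max (qdepth f) (qdepth g)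
  | _, .or f g => max (qdepth f) (qdepth g)
  | _, .all f => qdepth f + 1
  | _, .ex f => qdepth f + 1

/-- Satisfaction of a formula in a simple graph, under an assignment of the
free variables. -/
def Sat {V : Type*} (G : SimpleGraph V) : ∀ {n : ℕ}, GraphFormula n → (Fin n → V) → Prop
  | _, .eq i j, a => a i = a j
  | _, .adj i j, a => G.Adj (a i) (a j)
  | _, .not f, a => ¬ Sat G f a
  | _, .and f g, a => Sat G f a ∧ Sat G g a
  | _, .or f g, a => Sat G f a ∨ Sat G g a
  | _, .all f, a => ∀ v, Sat G f (Fin.snoc a v)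
  | _, .ex f, a => ∃ v, Sat G f (Fin.snoc a v)

/-- Existential closure: prefix a formula with one existential quantifier for
each of its free variables. -/
def exClosure : ∀ {n : ℕ}, GraphFormula n → GraphFormula 0
  | 0, f => f
  | _ + 1, f => exClosure (GraphFormula.ex f)

end GraphFormula

/-- A graph satisfies a sentence (formula with no free variables). -/
def SatSentence {V : Type*} (G : SimpleGraph V) (φ : GraphFormula 0) : Prop :=
  GraphFormula.Sat G φ Fin.elim0

/-! ### Local certification -/

/-- A valid identifier assignment: pairwise distinct identifiers in `[1, n ^ c]`. -/
def ValidIds (c : ℕ) {n : ℕ} (ids : Fin n → ℕ) : Prop :=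
  Function.Injective ids ∧ ∀ v, 1 ≤ ids v ∧ ids v ≤ n ^ c

/-- The part of the local view of a vertex `v` consisting of the
(identifier, certificate) pairs of its neighbors. -/
def neighborsView {n : ℕ} (G : SimpleGraph (Fin n)) (ids : Fin n → ℕ)
    (cert : Fin n → List Bool) (v : Fin n) : Set (ℕ × List Bool) :=
  {p | ∃ u, G.Adj v u ∧ p = (ids u, cert u)}

/-- The part of the local view of a vertex `v`, in the presence of inputs
(labels), consisting of the (identifier, label, certificate) triples of its
neighbors. -/
def labeledNeighborsView {n : ℕ} {L : Type*} (G : SimpleGraph (Fin n)) (ids : Fin n → ℕ)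
    (lab : Fin n → L) (cert : Fin n → List Bool) (v : Fin n) :
    Set (ℕ × L × List Bool) :=
  {p | ∃ u, G.Adj v u ∧ p = (ids u, lab u, cert u)}

/-! ### Rooted trees, elimination trees and treedepth -/

/-- A rooted tree on the vertex set `V`, given by its root and parent
function: every vertex reaches the root by iterating the parent map. -/
structure ElimTree (V : Type*) where
  root : V
  parent : V → V
  parent_root : parent root = root
  reaches_root : ∀ v, ∃ j : ℕ, parent^[j] v = root

namespace ElimTree

variable {V : Type*}

/-- The depth of a vertex in a rooted tree (the root has depth 0). -/
noncomputable def depth (T : ElimTree V) (v : V) : ℕ :=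
  sInf {j : ℕ | T.parent^[j] v = T.root}

/-- `u` is an ancestor of `v` (possibly `u = v`). -/
def IsAncestor (T : ElimTree V) (u v : V) : Prop :=
  ∃ j : ℕ, T.parent^[j] v = u

/-- The set of vertices of `S` in the subtree rooted at `v`. -/
def subtree (T : ElimTree V) (S : Set V) (v : V) : Set V :=
  {x ∈ S | T.IsAncestor v x}

end ElimTree

/-- `T` is a `t`-model (elimination tree of depth at most `t`) of `G`:
every vertex has depth at most `t` and every edge of `G` joins a vertex to
one of its ancestors. -/
def IsModelOfDepth {V : Type*} (T : ElimTree V) (G : SimpleGraph V) (t : ℕ) : Prop :=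
  (∀ v, T.depth v ≤ t) ∧ ∀ u v, G.Adj u v → T.IsAncestor u v ∨ T.IsAncestor v u

/-- The graph `G` has treedepth at most `t`. -/
def TreedepthLE {V : Type*} (G : SimpleGraph V) (t : ℕ) : Prop :=
  ∃ T : ElimTree V, IsModelOfDepth T G t

/-- A model `T` of `G` is coherent if for every non-root vertex `w` (i.e.
every child `w` of a vertex of `T`), some vertex of the subtree rooted at `w`
is adjacent in `G` to the parent of `w`. -/
def Coherent {V : Type*} (T : ElimTree V) (G : SimpleGraph V) : Prop :=
  ∀ w, w ≠ T.root → ∃ x, T.IsAncestor w x ∧ G.Adj x (T.parent w)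

/-! ### Types, prunings and k-reduced graphs -/

/-- The type of `v` in the induced structure on `S₁` equals the type of `w`
in the induced structure on `S₂`: there is a bijection between the subtrees
rooted at `v` and `w` preserving the tree structure, the depths, and the
ancestor vectors (adjacency in `G` to the ancestors). -/
def SameTypeIn {V : Type*} (G : SimpleGraph V) (T : ElimTree V)
    (S₁ S₂ : Set V) (v w : V) : Prop :=
  ∃ f : V → V,
    Set.BijOn f (T.subtree S₁ v) (T.subtree S₂ w) ∧
    f v = w ∧
    (∀ x ∈ T.subtree S₁ v, x ≠ v → f (T.parent x) = T.parent (f x)) ∧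
    (∀ x ∈ T.subtree S₁ v, T.depth (f x) = T.depth x ∧
      ∀ m : ℕ, G.Adj x (T.parent^[m] x) ↔ G.Adj (f x) (T.parent^[m] (f x)))

/-- Two vertices of `S` have the same type. -/
def SameType {V : Type*} (G : SimpleGraph V) (T : ElimTree V) (S : Set V) (v w : V) : Prop :=
  SameTypeIn G T S S v w

/-- A valid pruning operation on the current vertex set `S`: `u` is a vertex
whose parent has more than `k` children (in `S`) of the same type as `u`, and
the whole subtree rooted at `u` is removed, yielding `S'`. -/
def PruneStep {V : Type*} (G : SimpleGraph V) (T : ElimTree V) (k : ℕ)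
    (S : Set V) (u : V) (S' : Set V) : Prop :=
  u ∈ S ∧ u ≠ T.root ∧
  (∃ C : Set V, C ⊆ S ∧ u ∈ C ∧ C.Finite ∧ k + 1 ≤ C.ncard ∧
    (∀ w ∈ C, T.parent w = T.parent u ∧ w ≠ T.parent u) ∧
    (∀ w ∈ C, SameType G T S u w)) ∧
  S' = S \ {x | T.IsAncestor u x}

/-- A valid pruning operation performed at a vertex of the largest possible
depth among all currently possible pruning operations. -/
def MaxPruneStep {V : Type*} (G : SimpleGraph V) (T : ElimTree V) (k : ℕ)
    (S : Set V) (u : V) (S' : Set V) : Prop :=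
  PruneStep G T k S u S' ∧
    ∀ u' S'', PruneStep G T k S u' S'' → T.depth u' ≤ T.depth u

/-- A complete pruning process producing a `k`-reduced graph of `G` from the
model `T`: starting from all of `G`, valid pruning operations are applied,
always at a vertex of largest possible depth, until none applies. -/
structure PruningProcess {V : Type*} (G : SimpleGraph V) (T : ElimTree V) (k : ℕ) where
  len : ℕ
  sets : ℕ → Set V
  prunedAt : ℕ → V
  init : sets 0 = Set.univ
  step : ∀ i < len, MaxPruneStep G T k (sets i) (prunedAt i) (sets (i + 1))
  halt : ∀ u S', ¬ PruneStep G T k (sets len) u S'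

namespace PruningProcess

variable {V : Type*} {G : SimpleGraph V} {T : ElimTree V} {k : ℕ}

/-- The vertex set of the resulting `k`-reduced graph. -/
def result (P : PruningProcess G T k) : Set V := P.sets P.len

/-- The index of the step at which a vertex was deleted (the current set at
that moment still contains the vertex); for surviving vertices this is the
final index. -/
noncomputable def lastIdx (P : PruningProcess G T k) (v : V) : ℕ :=
  sInf {i : ℕ | i = P.len ∨ v ∉ P.sets (i + 1)}

/-- The vertex set that was current when `v` was deleted (for a deleted
vertex), or the final vertex set (for a surviving vertex). -/
noncomputable def currentSet (P : PruningProcess G T k) (v : V) : Set V :=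
  P.sets (P.lastIdx v)

/-- `v` and `w` have the same end type: the end type of a deleted vertex is
its type in the graph current when it was deleted, and the end type of a
surviving vertex is its type in the resulting graph. -/
def EndTypeEq (P : PruningProcess G T k) (v w : V) : Prop :=
  SameTypeIn G T (P.currentSet v) (P.currentSet w) v w

end PruningProcess

/-!
A vertex is certified by the identifiers of its proper ancestors in a `t`-model, written in a
prefix-free binary code with `O(log n)` bits per identifier. It checks that its list `M` has
length at most `t` and that `id :: M` is comparable in the suffix order with the corresponding
list of each neighbour; since every edge of a model joins a vertex to an ancestor, honest
certificates pass.

Conversely, if every vertex accepts, the lists `id v :: M v` are pairwise distinct and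
suffix-comparable along edges. By connectivity a shortest list is a suffix of all of them, and
sending each vertex to the vertex whose list is a longest proper suffix of its own yields an
elimination tree of depth at most `t` in which every suffix relation, hence every edge, joins a
vertex to an ancestor.
-/

theorem Nat.bits_injective : Function.Injective Nat.bits := fun m n h =>
  Nat.eq_of_testBit_eq fun i => by rw [Nat.testBit_eq_inth, Nat.testBit_eq_inth, h]

theorem List.flatMap_injective {α β : Type*} {f : α → List β} (hne : ∀ a, f a ≠ [])
    (hf : ∀ a b x y, f a ++ x = f b ++ y → a = b) :
    Function.Injective fun l : List α => l.flatMap f := by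
  intro l l' h
  induction l generalizing l' with
  | nil => cases l' <;> simp_all
  | cons a l ih =>
    cases l' with
    | nil => simp_all
    | cons a' l' =>
      simp only [List.flatMap_cons] at h
      obtain rfl := hf a a' _ _ h
      rw [ih (List.append_cancel_left h)]

namespace ElimTree

variable {V : Type*} (T : ElimTree V)

theorem iterate_depth (v : V) : T.parent^[T.depth v] v = T.root :=
  Nat.sInf_mem (T.reaches_root v)

theorem depth_le_of_iterate_eq_root {v : V} {j : ℕ} (h : T.parent^[j] v = T.root) :
    T.depth v ≤ j :=
  Nat.sInf_le h

theorem depth_parent_add_one {v : V} (hv : v ≠ T.root) :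
    T.depth (T.parent v) + 1 = T.depth v := by
  have hpos : T.depth v ≠ 0 := fun h => hv (by simpa [h] using T.iterate_depth v)
  have hle : T.depth (T.parent v) ≤ T.depth v - 1 := T.depth_le_of_iterate_eq_root <| by
    rw [← Function.iterate_succ_apply, Nat.succ_eq_add_one, Nat.sub_add_cancel
      (Nat.one_le_iff_ne_zero.mpr hpos), T.iterate_depth]
  have hge : T.depth v ≤ T.depth (T.parent v) + 1 :=
    T.depth_le_of_iterate_eq_root (by rw [Function.iterate_succ_apply, T.iterate_depth])
  omega

noncomputable def properAncestors (v : V) : List V :=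
  (List.range (T.depth v)).map fun j => T.parent^[j + 1] v

theorem length_properAncestors (v : V) : (T.properAncestors v).length = T.depth v := by
  simp [properAncestors]

theorem properAncestors_of_ne_root {v : V} (hv : v ≠ T.root) :
    T.properAncestors v = T.parent v :: T.properAncestors (T.parent v) := by
  rw [properAncestors, ← T.depth_parent_add_one hv, List.range_succ_eq_map, List.map_cons,
    List.map_map]
  rfl

theorem cons_properAncestors_parent_suffix (v : V) :
    T.parent v :: T.properAncestors (T.parent v) <:+ v :: T.properAncestors v := by
  by_cases hv : v = T.root
  · subst hv
    rw [T.parent_root]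
  · rw [T.properAncestors_of_ne_root hv]
    exact List.suffix_cons _ _

theorem IsAncestor.cons_properAncestors_suffix {T : ElimTree V} {u v : V}
    (h : T.IsAncestor u v) : u :: T.properAncestors u <:+ v :: T.properAncestors v := by
  obtain ⟨j, rfl⟩ := h
  induction j with
  | zero => exact List.suffix_refl _
  | succ j ih =>
    rw [Function.iterate_succ_apply']
    exact (T.cons_properAncestors_parent_suffix _).trans ih

end ElimTree

def SuffixComparable {α : Type*} (l l' : List α) : Prop := l <:+ l' ∨ l' <:+ l

section SuffixLabelling

variable {V α : Type*} {L : V → List α} {r : V} {par : V → V}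

theorem SimpleGraph.Reachable.suffix_of_suffixComparable {G : SimpleGraph V} {v : V}
    (h : G.Reachable r v) (hmin : ∀ v, (L r).length ≤ (L v).length)
    (hadj : ∀ u v, G.Adj u v → SuffixComparable (L u) (L v)) : L r <:+ L v := by
  rw [SimpleGraph.reachable_iff_reflTransGen] at h
  induction h with
  | refl => exact List.suffix_refl _
  | tail _ hab ih =>
    rcases hadj _ _ hab with h | h
    · exact ih.trans h
    · exact List.suffix_of_suffix_length_le ih h (hmin _)

structure IsSuffixParent (L : V → List α) (r : V) (par : V → V) : Prop where
  root_suffix : ∀ v, L r <:+ L v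
  map_root : par r = r
  suffix : ∀ v, v ≠ r → L (par v) <:+ L v
  ne : ∀ v, v ≠ r → par v ≠ v
  longest : ∀ v, v ≠ r → ∀ w, L w <:+ L v → w ≠ v →
    (L w).length ≤ (L (par v)).length

theorem exists_isSuffixParent [Finite V] (hr : ∀ v, L r <:+ L v) :
    ∃ par, IsSuffixParent L r par := by
  have : ∀ v, ∃ w, (v = r → w = r) ∧ (v ≠ r → L w <:+ L v ∧ w ≠ v ∧
      ∀ w', L w' <:+ L v → w' ≠ v → (L w').length ≤ (L w).length) := by
    intro v
    by_cases hv : v = r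
    · exact ⟨r, fun _ => rfl, fun h => (h hv).elim⟩
    · obtain ⟨w, ⟨hwv, hw⟩, hmax⟩ := Set.exists_max_image {w | L w <:+ L v ∧ w ≠ v}
        (fun w => (L w).length) (Set.toFinite _) ⟨r, hr v, Ne.symm hv⟩
      exact ⟨w, fun h => (hv h).elim,
        fun _ => ⟨hwv, hw, fun w' h₁ h₂ => hmax w' ⟨h₁, h₂⟩⟩⟩
  choose par hroot hpar using this
  exact ⟨par, hr, hroot r rfl, fun v hv => (hpar v hv).1, fun v hv => (hpar v hv).2.1,
    fun v hv => (hpar v hv).2.2⟩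

namespace IsSuffixParent

theorem length_lt (hinj : Function.Injective L) (h : IsSuffixParent L r par) {v : V}
    (hv : v ≠ r) : (L (par v)).length < (L v).length :=
  lt_of_le_of_ne (h.suffix v hv).length_le fun heq =>
    h.ne v hv (hinj ((h.suffix v hv).eq_of_length heq))

theorem exists_iterate_eq_of_suffix (hinj : Function.Injective L) (h : IsSuffixParent L r par)
    {v w : V} (hwv : L w <:+ L v) : ∃ j, j + (L w).length ≤ (L v).length ∧ par^[j] v = w := by
  induction hlen : (L v).length using Nat.strong_induction_on generalizing v with
  | _ n ih =>
    by_cases hw : w = v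
    · exact ⟨0, by simp [hw, hlen], hw.symm⟩
    have hv : v ≠ r := by
      rintro rfl
      exact hw (hinj ((h.root_suffix w).eq_of_length (le_antisymm (h.root_suffix w).length_le
        hwv.length_le)).symm)
    have hwp : L w <:+ L (par v) := List.suffix_of_suffix_length_le hwv (h.suffix v hv)
      (h.longest v hv w hwv hw)
    obtain ⟨j, hj, hjw⟩ := ih _ (hlen ▸ h.length_lt hinj hv) hwp rfl
    exact ⟨j + 1, by have := h.length_lt hinj hv; omega, hjw⟩

def toElimTree (hinj : Function.Injective L) (h : IsSuffixParent L r par) : ElimTree V where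
  root := r
  parent := par
  parent_root := h.map_root
  reaches_root v :=
    (h.exists_iterate_eq_of_suffix hinj (h.root_suffix v)).imp fun _ => And.right

theorem isAncestor_toElimTree (hinj : Function.Injective L) (h : IsSuffixParent L r par)
    {u v : V} (huv : L u <:+ L v) : (h.toElimTree hinj).IsAncestor u v :=
  (h.exists_iterate_eq_of_suffix hinj huv).imp fun _ => And.right

end IsSuffixParent

theorem treedepthLE_of_suffixComparable [Finite V] {G : SimpleGraph V} (hG : G.Connected)
    {t : ℕ} (hinj : Function.Injective L) (hne : ∀ v, L v ≠ [])
    (hlen : ∀ v, (L v).length ≤ t + 1)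
    (hadj : ∀ u v, G.Adj u v → SuffixComparable (L u) (L v)) : TreedepthLE G t := by
  have := hG.nonempty
  obtain ⟨r, hmin⟩ := Finite.exists_min fun v => (L v).length
  obtain ⟨par, h⟩ := exists_isSuffixParent fun v =>
    (hG.preconnected r v).suffix_of_suffixComparable hmin hadj
  refine ⟨h.toElimTree hinj, fun v => ?_, fun u v huv => (hadj u v huv).imp
    (h.isAncestor_toElimTree hinj) (h.isAncestor_toElimTree hinj)⟩
  obtain ⟨j, hj, hjr⟩ := h.exists_iterate_eq_of_suffix hinj (h.root_suffix v)
  have := List.length_pos_iff.mpr (hne r)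
  have := hlen v
  exact (ElimTree.depth_le_of_iterate_eq_root _ hjr).trans (by omega)

end SuffixLabelling

theorem ValidIds.lt_two_pow {c n : ℕ} {ids : Fin n → ℕ} (hids : ValidIds c ids) (v : Fin n) :
    ids v < 2 ^ (c * (Nat.log 2 n + 1) + 1) := calc
  ids v ≤ n ^ c := (hids.2 v).2
  _ ≤ (2 ^ (Nat.log 2 n + 1)) ^ c :=
    Nat.pow_le_pow_left (Nat.lt_pow_succ_log_self one_lt_two n).le c
  _ = 2 ^ (c * (Nat.log 2 n + 1)) := by rw [← pow_mul, mul_comm]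
  _ < 2 ^ (c * (Nat.log 2 n + 1) + 1) := Nat.pow_lt_pow_succ one_lt_two

namespace TreedepthCertification

def escapeBits : List Bool → List Bool
  | [] => [false]
  | b :: l => true :: b :: escapeBits l

theorem length_escapeBits (l : List Bool) : (escapeBits l).length = 2 * l.length + 1 := by
  induction l with
  | nil => rfl
  | cons b l ih => simp only [escapeBits, List.length_cons, ih]; ring

theorem eq_of_escapeBits_append_eq {l l' x y : List Bool}
    (h : escapeBits l ++ x = escapeBits l' ++ y) : l = l' := by
  induction l generalizing l' with
  | nil => cases l' <;> simp_all [escapeBits]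
  | cons b l ih =>
    cases l' with
    | nil => simp [escapeBits] at h
    | cons b' l' =>
      simp only [escapeBits, List.cons_append, List.cons.injEq, true_and] at h
      rw [h.1, ih h.2]

def encodeNat (m : ℕ) : List Bool := escapeBits m.bits

def encodeList (l : List ℕ) : List Bool := l.flatMap encodeNat

theorem length_encodeNat_le {m B : ℕ} (h : m < 2 ^ B) : (encodeNat m).length ≤ 2 * B + 1 := by
  have : m.bits.length ≤ B := by rw [Nat.size_eq_bits_len]; exact Nat.size_le.mpr h
  rw [encodeNat, length_escapeBits]
  omega

theorem length_encodeList_le {l : List ℕ} {K : ℕ}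
    (h : ∀ m ∈ l, (encodeNat m).length ≤ K) :
    (encodeList l).length ≤ l.length * K := by
  have := List.sum_le_card_nsmul (l.map fun m => (encodeNat m).length) K (by simpa using h)
  simpa [encodeList, List.length_flatMap] using this

theorem encodeList_injective : Function.Injective encodeList :=
  List.flatMap_injective (fun m => by cases h : m.bits <;> simp [encodeNat, escapeBits, h])
    fun _ _ _ _ h => Nat.bits_injective (eq_of_escapeBits_append_eq h)

/-- In the honest certificate, `M` lists the identifiers of the proper ancestors of the vertex
in a `t`-model. -/
def AncestorListTest (t id : ℕ) (cert : List Bool) (view : Set (ℕ × List Bool)) : Prop :=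
  ∃ M, cert = encodeList M ∧ M.length ≤ t ∧
    ∀ p ∈ view, ∃ M', p.2 = encodeList M' ∧ SuffixComparable (id :: M) (p.1 :: M')

open Classical in
noncomputable def verifier (t id : ℕ) (cert : List Bool) (view : Set (ℕ × List Bool)) : Bool :=
  decide (AncestorListTest t id cert view)

noncomputable def ancestorCert {V : Type*} (T : ElimTree V) (ids : V → ℕ) (v : V) : List Bool :=
  encodeList ((T.properAncestors v).map ids)

theorem length_ancestorCert_le {V : Type*} {T : ElimTree V} {ids : V → ℕ} {t B : ℕ}
    (hT : ∀ v, T.depth v ≤ t) (hids : ∀ v, ids v < 2 ^ B) (v : V) :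
    (ancestorCert T ids v).length ≤ t * (2 * B + 1) :=
  (length_encodeList_le (by simpa using fun u _ => length_encodeNat_le (hids u))).trans
    (Nat.mul_le_mul_right _ (by simpa [T.length_properAncestors] using hT v))

theorem ancestorListTest_ancestorCert {n t : ℕ} {G : SimpleGraph (Fin n)} {T : ElimTree (Fin n)}
    (hT : IsModelOfDepth T G t) (ids : Fin n → ℕ) (v : Fin n) :
    AncestorListTest t (ids v) (ancestorCert T ids v)
      (neighborsView G ids (ancestorCert T ids) v) := by
  refine ⟨_, rfl, by simpa [T.length_properAncestors] using hT.1 v, ?_⟩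
  rintro _ ⟨u, hvu, rfl⟩
  refine ⟨_, rfl, ?_⟩
  simpa only [SuffixComparable, ← List.map_cons] using (hT.2 v u hvu).imp
    (fun h => h.cons_properAncestors_suffix.map ids)
    (fun h => h.cons_properAncestors_suffix.map ids)

theorem treedepthLE_of_forall_ancestorListTest {n t : ℕ} {G : SimpleGraph (Fin n)}
    (hG : G.Connected) {ids : Fin n → ℕ} (hids : Function.Injective ids)
    {cert : Fin n → List Bool}
    (h : ∀ v, AncestorListTest t (ids v) (cert v) (neighborsView G ids cert v)) :
    TreedepthLE G t := by
  choose M hcert hlen hview using h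
  refine treedepthLE_of_suffixComparable (L := fun v => ids v :: M v) hG
    (fun u v huv => hids (List.cons_eq_cons.mp huv).1) (fun v => List.cons_ne_nil _ _)
    (fun v => Nat.succ_le_succ (hlen v)) fun u v huv => ?_
  obtain ⟨M', hM', hcomp⟩ := hview u _ ⟨v, huv, rfl⟩
  rwa [encodeList_injective (hM'.symm.trans (hcert v))] at hcomp

end TreedepthCertification

theorem treedepth_local_certification_general (t c : ℕ) :
    ∃ (C : ℕ) (verify : ℕ → List Bool → Set (ℕ × List Bool) → Bool),
      ∀ (n : ℕ) (G : SimpleGraph (Fin n)), G.Connected →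
        ∀ ids : Fin n → ℕ, ValidIds c ids →
          ((TreedepthLE G t →
              ∃ cert : Fin n → List Bool,
                (∀ v, (cert v).length ≤ C * t * (Nat.log 2 n + 1)) ∧
                ∀ v, verify (ids v) (cert v) (neighborsView G ids cert v) = true) ∧
            (¬ TreedepthLE G t →
              ∀ cert : Fin n → List Bool,
                ∃ v, verify (ids v) (cert v) (neighborsView G ids cert v) = false)) := by
  open TreedepthCertification in
  refine ⟨2 * c + 3, verifier t, fun n G hG ids hids => ⟨?_, fun hnot cert => ?_⟩⟩
  · rintro ⟨T, hT⟩
    refine ⟨ancestorCert T ids, fun v => ?_, fun v => by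
      simpa [verifier] using ancestorListTest_ancestorCert hT ids v⟩
    calc (ancestorCert T ids v).length
        ≤ t * (2 * (c * (Nat.log 2 n + 1) + 1) + 1) :=
          length_ancestorCert_le hT.1 hids.lt_two_pow v
      _ ≤ (2 * c + 3) * t * (Nat.log 2 n + 1) := by nlinarith [Nat.zero_le (t * Nat.log 2 n)]
  · by_contra! h
    exact hnot (treedepthLE_of_forall_ancestorListTest hG hids.1 fun v => by
      simpa [verifier] using h v)

/-- For every fixed integer `t` (and fixed constant `c ≥ 1` for the
identifier range), the property "the connected graph `G` has treedepth at most `t`"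
admits a local certification scheme with certificates of size `O(t log n)` bits. -/
theorem treedepth_local_certification (t c : ℕ) (hc : 1 ≤ c) :
    ∃ (C : ℕ) (verify : ℕ → List Bool → Set (ℕ × List Bool) → Bool),
      ∀ (n : ℕ) (G : SimpleGraph (Fin n)), G.Connected →
        ∀ ids : Fin n → ℕ, ValidIds c ids →
          ((TreedepthLE G t →
              ∃ cert : Fin n → List Bool,
                (∀ v, (cert v).length ≤ C * t * (Nat.log 2 n + 1)) ∧
                ∀ v, verify (ids v) (cert v) (neighborsView G ids cert v) = true) ∧
            (¬ TreedepthLE G t →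
              ∀ cert : Fin n → List Bool,
                ∃ v, verify (ids v) (cert v) (neighborsView G ids cert v) = false)) :=
  treedepth_local_certification_general t c
end

section
/- For every first-order sentence φ of quantifier depth at most 2, the property 'the connected graph G satisfies φ' admits a local certification scheme with certificates of size O(log n) bits. -/
section DepthTwo

variable {α β : Type*}

namespace GraphFormula

def PartialIso (G : SimpleGraph α) (H : SimpleGraph β) {k : ℕ} (a : Fin k → α)
    (b : Fin k → β) : Prop :=
  ∀ i j, (a i = a j ↔ b i = b j) ∧ (G.Adj (a i) (a j) ↔ H.Adj (b i) (b j))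

def DuplicatorWins (G : SimpleGraph α) (H : SimpleGraph β) :
    ℕ → ∀ {k : ℕ}, (Fin k → α) → (Fin k → β) → Prop
  | 0, _, a, b => PartialIso G H a b
  | r + 1, _, a, b => PartialIso G H a b ∧
      (∀ v, ∃ w, DuplicatorWins G H r (Fin.snoc a v) (Fin.snoc b w)) ∧
      (∀ w, ∃ v, DuplicatorWins G H r (Fin.snoc a v) (Fin.snoc b w))

variable {G : SimpleGraph α} {H : SimpleGraph β}

theorem DuplicatorWins.partialIso {r k : ℕ} {a : Fin k → α} {b : Fin k → β}
    (h : DuplicatorWins G H r a b) : PartialIso G H a b := by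
  cases r with
  | zero => exact h
  | succ r => exact h.1

theorem sat_iff_of_duplicatorWins {k : ℕ} (f : GraphFormula k) {r : ℕ} (hr : f.qdepth ≤ r)
    {a : Fin k → α} {b : Fin k → β} (h : DuplicatorWins G H r a b) :
    Sat G f a ↔ Sat H f b := by
  induction f generalizing r with
  | eq i j => exact (h.partialIso i j).1
  | adj i j => exact (h.partialIso i j).2
  | not f ih => exact not_congr (ih hr h)
  | and f g ihf ihg =>
    rw [qdepth, max_le_iff] at hr
    exact and_congr (ihf hr.1 h) (ihg hr.2 h)
  | or f g ihf ihg =>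
    rw [qdepth, max_le_iff] at hr
    exact or_congr (ihf hr.1 h) (ihg hr.2 h)
  | all f ih =>
    obtain ⟨d, rfl⟩ := Nat.exists_eq_add_of_lt hr
    have hd : f.qdepth ≤ f.qdepth + d := Nat.le_add_right _ _
    refine ⟨fun hs w => ?_, fun hs v => ?_⟩
    · obtain ⟨v, hv⟩ := h.2.2 w
      exact (ih hd hv).mp (hs v)
    · obtain ⟨w, hw⟩ := h.2.1 v
      exact (ih hd hw).mpr (hs w)
  | ex f ih =>
    obtain ⟨d, rfl⟩ := Nat.exists_eq_add_of_lt hr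
    have hd : f.qdepth ≤ f.qdepth + d := Nat.le_add_right _ _
    refine ⟨fun ⟨v, hv⟩ => ?_, fun ⟨w, hw⟩ => ?_⟩
    · obtain ⟨w, hvw⟩ := h.2.1 v
      exact ⟨w, (ih hd hvw).mp hv⟩
    · obtain ⟨v, hvw⟩ := h.2.2 w
      exact ⟨v, (ih hd hvw).mpr hw⟩

end GraphFormula

namespace SimpleGraph

variable {G : SimpleGraph α} {H : SimpleGraph β}

open Classical in
noncomputable def depthTwoClass (G : SimpleGraph α) : ℕ :=
  if Subsingleton α then 0 else if G = ⊤ then 1 else if ∃ v, G.IsUniversal v then 2 else 3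

theorem depthTwoClass_of_subsingleton [Subsingleton α] : G.depthTwoClass = 0 := by
  simp [depthTwoClass, ‹Subsingleton α›]

theorem depthTwoClass_of_eq_top (hα : ¬Subsingleton α) (hG : G = ⊤) : G.depthTwoClass = 1 := by
  simp [depthTwoClass, hα, hG]

theorem depthTwoClass_of_isUniversal (hG : G ≠ ⊤) {v : α} (hv : G.IsUniversal v) :
    G.depthTwoClass = 2 := by
  have hα : ¬Subsingleton α := fun _ =>
    hG (eq_top_iff_forall_isUniversal.mpr fun _ => .of_subsingleton)
  simp [depthTwoClass, hα, hG, show ∃ v, G.IsUniversal v from ⟨v, hv⟩]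

theorem depthTwoClass_of_forall_not_isUniversal [Nonempty α] (h : ∀ v, ¬G.IsUniversal v) :
    G.depthTwoClass = 3 := by
  have hα : ¬Subsingleton α := fun _ => h (Classical.arbitrary α) .of_subsingleton
  have hG : G ≠ ⊤ := fun hG => h (Classical.arbitrary α) (eq_top_iff_forall_isUniversal.mp hG _)
  simp [depthTwoClass, hα, hG, h]

theorem iff_of_depthTwoClass_eq [Nonempty α] [Nonempty β]
    (h : G.depthTwoClass = H.depthTwoClass) :
    (Subsingleton α ↔ Subsingleton β) ∧ (G = ⊤ ↔ H = ⊤) ∧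
      ((∃ v, G.IsUniversal v) ↔ ∃ w, H.IsUniversal w) := by
  have hG₁ : Subsingleton α → G = ⊤ := fun _ =>
    eq_top_iff_forall_isUniversal.mpr fun _ => .of_subsingleton
  have hH₁ : Subsingleton β → H = ⊤ := fun _ =>
    eq_top_iff_forall_isUniversal.mpr fun _ => .of_subsingleton
  have hG₂ : G = ⊤ → ∃ v, G.IsUniversal v := fun hG =>
    ⟨Classical.arbitrary α, eq_top_iff_forall_isUniversal.mp hG _⟩
  have hH₂ : H = ⊤ → ∃ w, H.IsUniversal w := fun hH =>
    ⟨Classical.arbitrary β, eq_top_iff_forall_isUniversal.mp hH _⟩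
  unfold depthTwoClass at h
  split_ifs at h <;> first | omega | tauto

theorem exists_isUniversal_iff_of_depthTwoClass_eq [Nonempty α] [Nonempty β]
    (h : G.depthTwoClass = H.depthTwoClass) (v : α) :
    ∃ w, G.IsUniversal v ↔ H.IsUniversal w := by
  obtain ⟨-, htop, huniv⟩ := iff_of_depthTwoClass_eq h
  by_cases hv : G.IsUniversal v
  · obtain ⟨w, hw⟩ := huniv.mp ⟨v, hv⟩
    exact ⟨w, iff_of_true hv hw⟩
  · have hH : H ≠ ⊤ := htop.not.mp fun hG => hv (eq_top_iff_forall_isUniversal.mp hG v)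
    obtain ⟨w, hw⟩ := not_forall.mp (mt eq_top_iff_forall_isUniversal.mpr hH)
    exact ⟨w, iff_of_false hv hw⟩

/-- Duplicator's answer in the second round of the game. -/
theorem exists_eq_iff_and_adj_iff (hH : H.Connected) (hs : Subsingleton α ↔ Subsingleton β)
    {v : α} {w : β} (hu : G.IsUniversal v ↔ H.IsUniversal w) (v₂ : α) :
    ∃ w₂, (v = v₂ ↔ w = w₂) ∧ (G.Adj v v₂ ↔ H.Adj w w₂) := by
  by_cases hv : v = v₂
  · exact ⟨w, by simp [hv]⟩
  by_cases hadj : G.Adj v v₂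
  · have : Nontrivial β := not_subsingleton_iff_nontrivial.mp
      (hs.not.mp (not_subsingleton_iff_nontrivial.mpr (nontrivial_of_ne v v₂ hv)))
    obtain ⟨w₂, hw₂⟩ := hH.preconnected.exists_adj_of_nontrivial w
    exact ⟨w₂, by simp [hv, hadj, hw₂, hw₂.ne]⟩
  · have hw : ¬H.IsUniversal w := hu.not.mp fun h => hadj (h hv)
    simp only [IsUniversal, not_forall] at hw
    obtain ⟨w₂, hne, hn⟩ := hw
    exact ⟨w₂, by simp [hv, hne, hadj, hn]⟩

end SimpleGraph

namespace GraphFormula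

variable {G : SimpleGraph α} {H : SimpleGraph β}

theorem partialIso_single (v : α) (w : β) :
    PartialIso G H (Fin.snoc Fin.elim0 v : Fin 1 → α) (Fin.snoc Fin.elim0 w) := by
  intro i j
  fin_cases i; fin_cases j
  simp

theorem partialIso_pair {v v₂ : α} {w w₂ : β} (heq : v = v₂ ↔ w = w₂)
    (hadj : G.Adj v v₂ ↔ H.Adj w w₂) :
    PartialIso G H (Fin.snoc (Fin.snoc Fin.elim0 v : Fin 1 → α) v₂)
      (Fin.snoc (Fin.snoc Fin.elim0 w : Fin 1 → β) w₂) := by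
  intro i j
  fin_cases i <;> fin_cases j <;>
    simp [Fin.snoc, heq, hadj, eq_comm, G.adj_comm v₂ v, H.adj_comm w₂ w]

theorem duplicatorWins_one {v : α} {w : β}
    (hvw : ∀ v₂, ∃ w₂, (v = v₂ ↔ w = w₂) ∧ (G.Adj v v₂ ↔ H.Adj w w₂))
    (hwv : ∀ w₂, ∃ v₂, (w = w₂ ↔ v = v₂) ∧ (H.Adj w w₂ ↔ G.Adj v v₂)) :
    DuplicatorWins G H 1 (Fin.snoc Fin.elim0 v) (Fin.snoc Fin.elim0 w) := by
  refine ⟨partialIso_single v w, fun v₂ => ?_, fun w₂ => ?_⟩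
  · obtain ⟨w₂, heq, hadj⟩ := hvw v₂
    exact ⟨w₂, partialIso_pair heq hadj⟩
  · obtain ⟨v₂, heq, hadj⟩ := hwv w₂
    exact ⟨v₂, partialIso_pair heq.symm hadj.symm⟩

theorem duplicatorWins_two_of_depthTwoClass_eq (hG : G.Connected) (hH : H.Connected)
    (h : G.depthTwoClass = H.depthTwoClass) :
    DuplicatorWins G H 2 (Fin.elim0 : Fin 0 → α) (Fin.elim0 : Fin 0 → β) := by
  have := hG.nonempty
  have := hH.nonempty
  have hs := (SimpleGraph.iff_of_depthTwoClass_eq h).1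
  refine ⟨fun i => i.elim0, fun v => ?_, fun w => ?_⟩
  · obtain ⟨w, hu⟩ := SimpleGraph.exists_isUniversal_iff_of_depthTwoClass_eq h v
    exact ⟨w, duplicatorWins_one (SimpleGraph.exists_eq_iff_and_adj_iff hH hs hu)
      (SimpleGraph.exists_eq_iff_and_adj_iff hG hs.symm hu.symm)⟩
  · obtain ⟨v, hu⟩ := SimpleGraph.exists_isUniversal_iff_of_depthTwoClass_eq h.symm w
    exact ⟨v, duplicatorWins_one (SimpleGraph.exists_eq_iff_and_adj_iff hH hs hu.symm)
      (SimpleGraph.exists_eq_iff_and_adj_iff hG hs.symm hu)⟩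

theorem satSentence_iff_of_depthTwoClass_eq (hG : G.Connected) (hH : H.Connected)
    (h : G.depthTwoClass = H.depthTwoClass) {φ : GraphFormula 0} (hφ : φ.qdepth ≤ 2) :
    SatSentence G φ ↔ SatSentence H φ :=
  sat_iff_of_duplicatorWins φ hφ (duplicatorWins_two_of_depthTwoClass_eq hG hH h)

end GraphFormula

end DepthTwo

namespace SimpleGraph

variable {V : Type*} {G : SimpleGraph V}

theorem ncard_neighborSet_eq_iff [Fintype V] {v : V} :
    (G.neighborSet v).ncard = Fintype.card V - 1 ↔ G.IsUniversal v := by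
  have hcompl : ({v}ᶜ : Set V).ncard = Fintype.card V - 1 := by
    rw [Set.ncard_compl, Set.ncard_singleton, Nat.card_eq_fintype_card]
  rw [← neighborSet_eq_compl_singleton]
  refine ⟨fun h => Set.eq_of_subset_of_ncard_le (G.neighborSet_subset_compl v) ?_, fun h => ?_⟩
  · rw [hcompl, h]
  · rw [h, hcompl]

theorem Connected.apply_eq_of_forall_adj {X : Type*} (hG : G.Connected) {f : V → X}
    (h : ∀ u v, G.Adj u v → f u = f v) (u v : V) : f u = f v := by
  obtain ⟨p⟩ := hG u v
  induction p with
  | nil => rfl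
  | cons hadj _ ih => exact (h _ _ hadj).trans ih

theorem Connected.dist_lt_card [Fintype V] (hG : G.Connected) (u v : V) :
    G.dist u v < Fintype.card V := by
  obtain ⟨p, hp, hlen⟩ := hG.exists_path_of_dist u v
  exact hlen ▸ hp.length_lt

theorem Connected.exists_adj_dist_lt (hG : G.Connected) {v a : V} (h : v ≠ a) :
    ∃ u, G.Adj v u ∧ G.dist u a < G.dist v a := by
  obtain ⟨p, hp⟩ := hG.exists_walk_length_eq_dist v a
  cases p with
  | nil => exact absurd rfl h
  | cons hadj q =>
    refine ⟨_, hadj, ?_⟩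
    have := dist_le q
    rw [Walk.length_cons] at hp
    omega

theorem Connected.exists_adj_adj_not_adj (hG : G.Connected) {v : V} (hv : ¬G.IsUniversal v) :
    ∃ y z, G.Adj v y ∧ G.Adj y z ∧ ¬G.Adj v z ∧ z ≠ v := by
  simp only [IsUniversal, not_forall] at hv
  obtain ⟨z₀, hne, hz₀⟩ := hv
  -- the first edge of a walk from `v` to `z₀` that leaves the closed neighbourhood of `v`
  obtain ⟨d, -, hy, hz⟩ := (hG v z₀).some.exists_boundary_dart {x | x = v ∨ G.Adj v x}
    (.inl rfl) (by rintro (h | h); exacts [hne h.symm, hz₀ h])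
  simp only [Set.mem_ofPred_eq, not_or] at hy hz
  rcases hy with hy | hy
  · exact absurd (hy ▸ d.adj) hz.2
  · exact ⟨_, _, hy, d.adj, hz.2, hz.1⟩

end SimpleGraph

namespace DepthTwoCert

open SimpleGraph

/-- `code` is the class of the graph; in classes `1` and `2`, `hub` is the identifier of a
universal vertex and `deg = n - 1`; in class `2`, `dist` is the distance to a vertex that is not
universal; in class `3`, `mid` and `far` are the identifiers of vertices `y`, `z` such that
`v - y - z` is a path and `z ≠ v` is not adjacent to `v`. -/
structure Label where
  code : ℕ
  hub : ℕ
  deg : ℕ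
  dist : ℕ
  mid : ℕ
  far : ℕ

namespace Label

def shared (ℓ : Label) : ℕ × ℕ × ℕ := (ℓ.code, ℓ.hub, ℓ.deg)

def toList (ℓ : Label) : List ℕ := [ℓ.code, ℓ.hub, ℓ.deg, ℓ.dist, ℓ.mid, ℓ.far]

end Label

def labelView {V L : Type*} (G : SimpleGraph V) (ids : V → ℕ) (ℓ : V → L) (v : V) :
    Set (ℕ × L) :=
  {p | ∃ u, G.Adj v u ∧ p = (ids u, ℓ u)}

def HubCheck (i : ℕ) (ℓ : Label) (S : Set (ℕ × Label)) : Prop :=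
  (i = ℓ.hub ∨ ∃ p ∈ S, p.1 = ℓ.hub) ∧ (i = ℓ.hub → S.ncard = ℓ.deg)

/-- In class `3` the edge `y - z` of the path named by `v` is checked at `y`, by the last
clause. -/
def ClassCheck : ℕ → ℕ → Label → Set (ℕ × Label) → Prop
  | 0, _, _, S => S = ∅
  | 1, i, ℓ, S => HubCheck i ℓ S ∧ S.ncard = ℓ.deg ∧ 1 ≤ ℓ.deg
  | 2, i, ℓ, S => HubCheck i ℓ S ∧ (0 < ℓ.dist → ∃ p ∈ S, p.2.dist < ℓ.dist) ∧
      (ℓ.dist = 0 → S.ncard ≠ ℓ.deg)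
  | 3, i, ℓ, S => (∀ p ∈ S, p.1 ≠ ℓ.far) ∧ ℓ.far ≠ i ∧ (∃ p ∈ S, p.1 = ℓ.mid) ∧
      ∀ p ∈ S, p.2.mid = i → ∃ q ∈ S, q.1 = p.2.far
  | _, _, _, _ => False

def TrueOnClass (φ : GraphFormula 0) (k : ℕ) : Prop :=
  ∀ (m : ℕ) (H : SimpleGraph (Fin m)), H.Connected → H.depthTwoClass = k → SatSentence H φ

def LocalCheck (φ : GraphFormula 0) (i : ℕ) (ℓ : Label) (S : Set (ℕ × Label)) : Prop :=
  TrueOnClass φ ℓ.code ∧ (∀ p ∈ S, p.2.shared = ℓ.shared) ∧ ClassCheck ℓ.code i ℓ S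

section LabelView

variable {V L : Type*} {G : SimpleGraph V} {ids : V → ℕ} {ℓ : V → L}

theorem mem_labelView_of_adj {u v : V} (h : G.Adj v u) : (ids u, ℓ u) ∈ labelView G ids ℓ v :=
  ⟨u, h, rfl⟩

theorem labelView_eq_image (v : V) :
    labelView G ids ℓ v = (fun u => (ids u, ℓ u)) '' G.neighborSet v := by
  ext p
  exact ⟨fun ⟨u, hu, hp⟩ => ⟨u, hu, hp.symm⟩, fun ⟨u, hu, hp⟩ => ⟨u, hu, hp.symm⟩⟩

theorem ncard_labelView (hids : ids.Injective) (v : V) :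
    (labelView G ids ℓ v).ncard = (G.neighborSet v).ncard := by
  rw [labelView_eq_image]
  exact Set.ncard_image_of_injective _ fun a b h => hids (congrArg Prod.fst h)

theorem image_labelView {L' : Type*} (f : L → L') (v : V) :
    Prod.map id f '' labelView G ids ℓ v = labelView G ids (f ∘ ℓ) v := by
  rw [labelView_eq_image, labelView_eq_image, Set.image_image]
  rfl

end LabelView

section Soundness

variable {V : Type*} {G : SimpleGraph V} {ids : V → ℕ} {ℓ : V → Label}

theorem subsingleton_of_forall_labelView_eq_empty (hG : G.Connected)
    (h : ∀ v, labelView G ids ℓ v = ∅) : Subsingleton V := by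
  by_contra hV
  have := not_subsingleton_iff_nontrivial.mp hV
  obtain ⟨v⟩ := hG.nonempty
  obtain ⟨u, hu⟩ := hG.preconnected.exists_adj_of_nontrivial v
  simpa [h v] using mem_labelView_of_adj (ids := ids) (ℓ := ℓ) hu

theorem exists_isUniversal_of_hubCheck [Fintype V] [Nonempty V] (hids : ids.Injective) {h D : ℕ}
    (hhub : ∀ v, (ℓ v).hub = h) (hdeg : ∀ v, (ℓ v).deg = D)
    (hc : ∀ v, HubCheck (ids v) (ℓ v) (labelView G ids ℓ v)) :
    ∃ w, G.IsUniversal w ∧ D = Fintype.card V - 1 := by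
  have hnamed : ∀ v, ids v = h ∨ ∃ u, G.Adj v u ∧ ids u = h := by
    intro v
    rcases (hc v).1 with hv | ⟨_, ⟨u, hu, rfl⟩, hid⟩
    · exact .inl (hv.trans (hhub v))
    · exact .inr ⟨u, hu, hid.trans (hhub v)⟩
  obtain ⟨w, hw⟩ : ∃ w, ids w = h := by
    obtain ⟨v⟩ := ‹Nonempty V›
    rcases hnamed v with hv | ⟨u, -, hu⟩
    exacts [⟨v, hv⟩, ⟨u, hu⟩]
  have huniv : G.IsUniversal w := by
    intro u hwu
    rcases hnamed u with hu | ⟨x, hux, hx⟩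
    · exact absurd (hids (hu.trans hw.symm)).symm hwu
    · exact (hids (hx.trans hw.symm) ▸ hux).symm
  have hdegw := (hc w).2 (hw.trans (hhub w).symm)
  rw [ncard_labelView hids, hdeg, ncard_neighborSet_eq_iff.mpr huniv] at hdegw
  exact ⟨w, huniv, hdegw.symm⟩

theorem depthTwoClass_eq_one_of_classCheck [Fintype V] (hG : G.Connected) (hids : ids.Injective)
    {h D : ℕ} (hhub : ∀ v, (ℓ v).hub = h) (hdeg : ∀ v, (ℓ v).deg = D)
    (hc : ∀ v, ClassCheck 1 (ids v) (ℓ v) (labelView G ids ℓ v)) : G.depthTwoClass = 1 := by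
  have := hG.nonempty
  obtain ⟨w, -, hD⟩ := exists_isUniversal_of_hubCheck hids hhub hdeg fun v => (hc v).1
  have hall : ∀ v, G.IsUniversal v := fun v => by
    have hv := (hc v).2.1
    rwa [ncard_labelView hids, hdeg, hD, ncard_neighborSet_eq_iff] at hv
  refine depthTwoClass_of_eq_top (fun hs => ?_) (eq_top_iff_forall_isUniversal.mpr hall)
  have hpos := (hc w).2.2
  rw [hdeg, hD] at hpos
  have := Fintype.card_le_one_iff_subsingleton.mpr hs
  omega

theorem depthTwoClass_eq_two_of_classCheck [Fintype V] (hG : G.Connected) (hids : ids.Injective)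
    {h D : ℕ} (hhub : ∀ v, (ℓ v).hub = h) (hdeg : ∀ v, (ℓ v).deg = D)
    (hc : ∀ v, ClassCheck 2 (ids v) (ℓ v) (labelView G ids ℓ v)) : G.depthTwoClass = 2 := by
  have := hG.nonempty
  obtain ⟨w, hw, hD⟩ := exists_isUniversal_of_hubCheck hids hhub hdeg fun v => (hc v).1
  set z := Function.argmin fun v => (ℓ v).dist
  have hz : (ℓ z).dist = 0 := by
    by_contra hne
    obtain ⟨_, ⟨u, -, rfl⟩, hlt⟩ := (hc z).2.1 (Nat.pos_of_ne_zero hne)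
    exact Function.not_lt_argmin (fun v => (ℓ v).dist) u hlt
  have hnz : ¬G.IsUniversal z := by
    rw [← ncard_neighborSet_eq_iff, ← hD, ← hdeg z, ← ncard_labelView hids]
    exact (hc z).2.2 hz
  exact depthTwoClass_of_isUniversal (fun htop => hnz (eq_top_iff_forall_isUniversal.mp htop z)) hw

theorem depthTwoClass_eq_three_of_classCheck (hG : G.Connected)
    (hc : ∀ v, ClassCheck 3 (ids v) (ℓ v) (labelView G ids ℓ v)) : G.depthTwoClass = 3 := by
  have := hG.nonempty
  refine depthTwoClass_of_forall_not_isUniversal fun w hw => ?_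
  obtain ⟨hfar, hfar_ne, ⟨_, ⟨y, hwy, rfl⟩, hy⟩, -⟩ := hc w
  obtain ⟨_, ⟨z, hyz, rfl⟩, hz⟩ := (hc y).2.2.2 _ (mem_labelView_of_adj hwy.symm) hy.symm
  have hzw : z ≠ w := fun h => hfar_ne (h ▸ hz).symm
  exact hfar _ (mem_labelView_of_adj (hw hzw.symm)) hz

end Soundness

theorem satSentence_of_forall_localCheck {n : ℕ} {G : SimpleGraph (Fin n)} (hG : G.Connected)
    {ids : Fin n → ℕ} (hids : ids.Injective) {φ : GraphFormula 0} {ℓ : Fin n → Label}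
    (h : ∀ v, LocalCheck φ (ids v) (ℓ v) (labelView G ids ℓ v)) : SatSentence G φ := by
  obtain ⟨v₀⟩ := hG.nonempty
  have hshared : ∀ v, (ℓ v).shared = (ℓ v₀).shared := fun v =>
    hG.apply_eq_of_forall_adj (fun u v huv => ((h u).2.1 _ (mem_labelView_of_adj huv)).symm) v v₀
  have hcode : ∀ v, (ℓ v).code = (ℓ v₀).code := fun v => congrArg (·.1) (hshared v)
  have hhub : ∀ v, (ℓ v).hub = (ℓ v₀).hub := fun v => congrArg (·.2.1) (hshared v)
  have hdeg : ∀ v, (ℓ v).deg = (ℓ v₀).deg := fun v => congrArg (·.2.2) (hshared v)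
  have hc : ∀ v, ClassCheck (ℓ v₀).code (ids v) (ℓ v) (labelView G ids ℓ v) := fun v =>
    hcode v ▸ (h v).2.2
  refine (h v₀).1 n G hG ?_
  generalize (ℓ v₀).code = k at hc
  match k, hc with
  | 0, hc =>
    have := subsingleton_of_forall_labelView_eq_empty hG hc
    exact depthTwoClass_of_subsingleton
  | 1, hc => exact depthTwoClass_eq_one_of_classCheck hG hids hhub hdeg hc
  | 2, hc => exact depthTwoClass_eq_two_of_classCheck hG hids hhub hdeg hc
  | 3, hc => exact depthTwoClass_eq_three_of_classCheck hG hc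
  | _ + 4, hc => exact (hc v₀).elim

section Completeness

variable {V : Type*} {G : SimpleGraph V} {ids : V → ℕ} {B : ℕ}

def IsCertifyingLabelling (B : ℕ) (G : SimpleGraph V) (ids : V → ℕ) (ℓ : V → Label) : Prop :=
  ∀ v, (ℓ v).code = G.depthTwoClass ∧ (∀ u, (ℓ u).shared = (ℓ v).shared) ∧
    (∀ x ∈ (ℓ v).toList, x ≤ B) ∧ ClassCheck G.depthTwoClass (ids v) (ℓ v) (labelView G ids ℓ v)

theorem hubCheck_of_isUniversal [Fintype V] (hids : ids.Injective) {ℓ : V → Label} {w : V}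
    (hw : G.IsUniversal w) (hhub : ∀ v, (ℓ v).hub = ids w)
    (hdeg : (ℓ w).deg = Fintype.card V - 1) (v : V) :
    HubCheck (ids v) (ℓ v) (labelView G ids ℓ v) := by
  refine ⟨?_, fun hv => ?_⟩
  · rw [hhub]
    by_cases hvw : v = w
    · exact .inl (congrArg ids hvw)
    · exact .inr ⟨_, mem_labelView_of_adj (hw (Ne.symm hvw)).symm, rfl⟩
  · obtain rfl := hids (hv.trans (hhub v))
    rw [ncard_labelView hids, hdeg, ncard_neighborSet_eq_iff.mpr hw]

theorem exists_isCertifyingLabelling_of_subsingleton [Subsingleton V] :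
    ∃ ℓ, IsCertifyingLabelling B G ids ℓ := by
  refine ⟨fun _ => ⟨0, 0, 0, 0, 0, 0⟩, fun v => ⟨depthTwoClass_of_subsingleton.symm, fun _ => rfl,
    by simp [Label.toList], ?_⟩⟩
  rw [depthTwoClass_of_subsingleton, ClassCheck, Set.eq_empty_iff_forall_notMem]
  rintro _ ⟨u, hu, -⟩
  exact hu.ne (Subsingleton.elim v u)

theorem exists_isCertifyingLabelling_of_eq_top [Fintype V] (hids : ids.Injective)
    (hcard : Fintype.card V ≤ B)
    (hid : ∀ v, ids v ≤ B) (hs : ¬Subsingleton V) (hG : G = ⊤) :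
    ∃ ℓ, IsCertifyingLabelling B G ids ℓ := by
  have := not_subsingleton_iff_nontrivial.mp hs
  obtain ⟨w⟩ := (inferInstance : Nonempty V)
  have huniv : ∀ v, G.IsUniversal v := eq_top_iff_forall_isUniversal.mp hG
  have h2 := Fintype.one_lt_card_iff_nontrivial.mpr this
  set ℓ : V → Label := fun _ => ⟨1, ids w, Fintype.card V - 1, 0, 0, 0⟩
  refine ⟨ℓ, fun v => ⟨(depthTwoClass_of_eq_top hs hG).symm, fun _ => rfl, ?_, ?_⟩⟩
  · simp [ℓ, Label.toList, hid w]
    omega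
  · rw [depthTwoClass_of_eq_top hs hG]
    refine ⟨hubCheck_of_isUniversal hids (huniv w) (fun _ => rfl) rfl v, ?_, by simp [ℓ]; omega⟩
    rw [ncard_labelView hids, ncard_neighborSet_eq_iff.mpr (huniv v)]

theorem exists_isCertifyingLabelling_of_isUniversal [Fintype V] (hG : G.Connected)
    (hids : ids.Injective) (hB : 3 ≤ B) (hcard : Fintype.card V ≤ B) (hid : ∀ v, ids v ≤ B) (htop : G ≠ ⊤) {w : V}
    (hw : G.IsUniversal w) : ∃ ℓ, IsCertifyingLabelling B G ids ℓ := by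
  obtain ⟨a, ha⟩ := not_forall.mp (mt eq_top_iff_forall_isUniversal.mpr htop)
  set ℓ : V → Label := fun v => ⟨2, ids w, Fintype.card V - 1, G.dist v a, 0, 0⟩
  refine ⟨ℓ, fun v => ⟨(depthTwoClass_of_isUniversal htop hw).symm, fun _ => rfl, ?_, ?_⟩⟩
  · have := hG.dist_lt_card v a
    simp [ℓ, Label.toList, hid w]
    omega
  · rw [depthTwoClass_of_isUniversal htop hw]
    refine ⟨hubCheck_of_isUniversal hids hw (fun _ => rfl) rfl v, fun hpos => ?_, fun hzero => ?_⟩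
    · obtain ⟨u, hvu, hlt⟩ := hG.exists_adj_dist_lt (v := v) (a := a) (by rintro rfl; simp [ℓ] at hpos)
      exact ⟨_, mem_labelView_of_adj hvu, hlt⟩
    · obtain rfl := hG.dist_eq_zero_iff.mp hzero
      rwa [ncard_labelView hids, Ne, ncard_neighborSet_eq_iff]

theorem exists_isCertifyingLabelling_of_forall_not_isUniversal (hG : G.Connected)
    (hids : ids.Injective) (hB : 3 ≤ B) (hid : ∀ v, ids v ≤ B) (h : ∀ v, ¬G.IsUniversal v) :
    ∃ ℓ, IsCertifyingLabelling B G ids ℓ := by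
  have := hG.nonempty
  choose y z hy hyz hz hzv using fun v => hG.exists_adj_adj_not_adj (h v)
  set ℓ : V → Label := fun v => ⟨3, 0, 0, 0, ids (y v), ids (z v)⟩
  refine ⟨ℓ, fun v => ⟨(depthTwoClass_of_forall_not_isUniversal h).symm, fun _ => rfl, ?_, ?_⟩⟩
  · simp [ℓ, Label.toList, hid (y v), hid (z v)]
    omega
  · rw [depthTwoClass_of_forall_not_isUniversal h]
    refine ⟨?_, hids.ne (hzv v), ⟨_, mem_labelView_of_adj (hy v), rfl⟩, ?_⟩
    · rintro _ ⟨u, hvu, rfl⟩ hu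
      exact hz v (hids hu ▸ hvu)
    · rintro _ ⟨u, -, rfl⟩ hu
      exact ⟨_, mem_labelView_of_adj (hids hu ▸ hyz u), rfl⟩

theorem exists_isCertifyingLabelling [Fintype V] (hG : G.Connected) (hids : ids.Injective) (hB : 3 ≤ B)
    (hcard : Fintype.card V ≤ B) (hid : ∀ v, ids v ≤ B) :
    ∃ ℓ, IsCertifyingLabelling B G ids ℓ := by
  by_cases hs : Subsingleton V
  · exact exists_isCertifyingLabelling_of_subsingleton
  by_cases htop : G = ⊤
  · exact exists_isCertifyingLabelling_of_eq_top hids hcard hid hs htop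
  by_cases hu : ∃ w, G.IsUniversal w
  · obtain ⟨w, hw⟩ := hu
    exact exists_isCertifyingLabelling_of_isUniversal hG hids hB hcard hid htop hw
  · exact exists_isCertifyingLabelling_of_forall_not_isUniversal hG hids hB hid (not_exists.mp hu)

end Completeness

section Encoding

def bitsLE : ℕ → ℕ → List Bool
  | 0, _ => []
  | W + 1, x => (x % 2 == 1) :: bitsLE W (x / 2)

def ofBitsLE (l : List Bool) : ℕ := Nat.ofDigits 2 (l.map Bool.toNat)

theorem length_bitsLE (W x : ℕ) : (bitsLE W x).length = W := by
  induction W generalizing x with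
  | zero => rfl
  | succ W ih => simp [bitsLE, ih]

theorem ofBitsLE_bitsLE {W x : ℕ} (h : x < 2 ^ W) : ofBitsLE (bitsLE W x) = x := by
  induction W generalizing x with
  | zero => simp_all [bitsLE, ofBitsLE]
  | succ W ih =>
    have hx : x / 2 < 2 ^ W := by rw [pow_succ] at h; omega
    have := ih hx
    simp only [ofBitsLE] at this
    simp only [bitsLE, ofBitsLE, List.map_cons, Nat.ofDigits_cons, this]
    rcases Nat.mod_two_eq_zero_or_one x with hx | hx <;> simp [hx] <;> omega

theorem take_drop_flatMap_bitsLE (W : ℕ) {xs : List ℕ} {j : ℕ} (hj : j < xs.length) :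
    ((xs.flatMap (bitsLE W)).drop (j * W)).take W = bitsLE W xs[j] := by
  induction xs generalizing j with
  | nil => simp at hj
  | cons x xs ih =>
    cases j with
    | zero => simp [length_bitsLE]
    | succ j =>
      rw [List.flatMap_cons, Nat.succ_mul, Nat.add_comm, ← List.drop_drop,
        List.drop_left' (length_bitsLE W x)]
      exact ih (by simpa using hj)

namespace Label

def encode (W : ℕ) (ℓ : Label) : List Bool := ℓ.toList.flatMap (bitsLE W)

def decode (l : List Bool) : Label :=
  let W := l.length / 6
  let field (j : ℕ) := ofBitsLE ((l.drop (j * W)).take W)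
  ⟨field 0, field 1, field 2, field 3, field 4, field 5⟩

theorem length_encode (W : ℕ) (ℓ : Label) : (ℓ.encode W).length = 6 * W := by
  simp [encode, toList, length_bitsLE]
  ring

theorem decode_encode {W : ℕ} {ℓ : Label} (h : ∀ x ∈ ℓ.toList, x < 2 ^ W) :
    decode (ℓ.encode W) = ℓ := by
  have hfield : ∀ j (hj : j < ℓ.toList.length),
      ofBitsLE (((ℓ.encode W).drop (j * W)).take W) = ℓ.toList[j] := fun j hj =>
    (congrArg ofBitsLE (take_drop_flatMap_bitsLE W hj)).trans
      (ofBitsLE_bitsLE (h _ (List.getElem_mem hj)))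
  simp only [decode, length_encode, Nat.mul_div_cancel_left W (by norm_num : 0 < 6)]
  rw [hfield 0 (by simp [toList]), hfield 1 (by simp [toList]), hfield 2 (by simp [toList]),
    hfield 3 (by simp [toList]), hfield 4 (by simp [toList]), hfield 5 (by simp [toList])]
  rfl

end Label

theorem lt_two_pow_of_le {n c x : ℕ} (hx : x ≤ n + n ^ c + 3) :
    x < 2 ^ ((c + 1) * (Nat.log 2 n + 1) + 2) := by
  set L := Nat.log 2 n + 1
  have hn : n < 2 ^ L := Nat.lt_pow_succ_log_self (by norm_num) n
  have hnc : n ^ c ≤ 2 ^ (c * L) := by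
    rw [pow_mul']
    exact Nat.pow_le_pow_left hn.le c
  have hL : 2 ^ L ≤ 2 ^ ((c + 1) * L) := Nat.pow_le_pow_right (by norm_num) (by nlinarith)
  have hcL : 2 ^ (c * L) ≤ 2 ^ ((c + 1) * L) := Nat.pow_le_pow_right (by norm_num) (by nlinarith)
  have h2 : 2 ≤ 2 ^ L := Nat.le_self_pow (by omega) 2
  rw [pow_add]
  omega

end Encoding

theorem trueOnClass_depthTwoClass {V : Type*} {G : SimpleGraph V} (hG : G.Connected)
    {φ : GraphFormula 0} (hφ : φ.qdepth ≤ 2) (hsat : SatSentence G φ) :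
    TrueOnClass φ G.depthTwoClass := fun _ _ hH hclass =>
  (GraphFormula.satSentence_iff_of_depthTwoClass_eq hG hH hclass.symm hφ).mp hsat

open Classical in
noncomputable def verifier (φ : GraphFormula 0) (i : ℕ) (c : List Bool)
    (S : Set (ℕ × List Bool)) : Bool :=
  decide (LocalCheck φ i (Label.decode c) (Prod.map id Label.decode '' S))

theorem verifier_eq_true_iff {φ : GraphFormula 0} {i : ℕ} {c : List Bool}
    {S : Set (ℕ × List Bool)} :
    verifier φ i c S = true ↔ LocalCheck φ i (Label.decode c) (Prod.map id Label.decode '' S) := by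
  simp [verifier]

theorem image_decode_neighborsView {n : ℕ} (G : SimpleGraph (Fin n)) (ids : Fin n → ℕ)
    (cert : Fin n → List Bool) (v : Fin n) :
    Prod.map id Label.decode '' neighborsView G ids cert v =
      labelView G ids (Label.decode ∘ cert) v :=
  image_labelView Label.decode v

theorem satSentence_of_forall_verifier {n : ℕ} {G : SimpleGraph (Fin n)} (hG : G.Connected)
    {ids : Fin n → ℕ} (hids : ids.Injective) {φ : GraphFormula 0} (cert : Fin n → List Bool)
    (h : ∀ v, verifier φ (ids v) (cert v) (neighborsView G ids cert v) = true) :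
    SatSentence G φ :=
  satSentence_of_forall_localCheck hG hids (ℓ := Label.decode ∘ cert) fun v => by
    have hv := verifier_eq_true_iff.mp (h v)
    rwa [image_decode_neighborsView] at hv

theorem exists_cert_of_satSentence {c n : ℕ} {G : SimpleGraph (Fin n)} (hG : G.Connected)
    {ids : Fin n → ℕ} (hids : ValidIds c ids) {φ : GraphFormula 0} (hφ : φ.qdepth ≤ 2)
    (hsat : SatSentence G φ) :
    ∃ cert : Fin n → List Bool, (∀ v, (cert v).length ≤ 6 * (c + 3) * (Nat.log 2 n + 1)) ∧
      ∀ v, verifier φ (ids v) (cert v) (neighborsView G ids cert v) = true := by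
  obtain ⟨ℓ, hℓ⟩ := exists_isCertifyingLabelling (B := n + n ^ c + 3) hG hids.1 (by omega)
    (by rw [Fintype.card_fin]; omega) fun v => by have := (hids.2 v).2; omega
  set W := (c + 1) * (Nat.log 2 n + 1) + 2
  have hdecode : ∀ v, Label.decode ((ℓ v).encode W) = ℓ v := fun v =>
    Label.decode_encode fun x hx => lt_two_pow_of_le ((hℓ v).2.2.1 x hx)
  refine ⟨fun v => (ℓ v).encode W, fun v => ?_, fun v => ?_⟩
  · rw [Label.length_encode, show W = (c + 1) * (Nat.log 2 n + 1) + 2 from rfl]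
    nlinarith [Nat.zero_le (Nat.log 2 n)]
  · simp only [verifier_eq_true_iff, image_decode_neighborsView, Function.comp_def, hdecode]
    obtain ⟨hcode, hshared, -, hcheck⟩ := hℓ v
    refine ⟨hcode ▸ trueOnClass_depthTwoClass hG hφ hsat, ?_, hcode ▸ hcheck⟩
    rintro _ ⟨u, -, rfl⟩
    exact hshared u

end DepthTwoCert

theorem qdepth2_local_certification_general (c : ℕ)
    (φ : GraphFormula 0) (hφ : GraphFormula.qdepth φ ≤ 2) :
    ∃ (C : ℕ) (verify : ℕ → List Bool → Set (ℕ × List Bool) → Bool),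
      ∀ (n : ℕ) (G : SimpleGraph (Fin n)), G.Connected →
        ∀ ids : Fin n → ℕ, ValidIds c ids →
          ((SatSentence G φ →
              ∃ cert : Fin n → List Bool,
                (∀ v, (cert v).length ≤ C * (Nat.log 2 n + 1)) ∧
                ∀ v, verify (ids v) (cert v) (neighborsView G ids cert v) = true) ∧
            (¬ SatSentence G φ →
              ∀ cert : Fin n → List Bool,
                ∃ v, verify (ids v) (cert v) (neighborsView G ids cert v) = false)) := by
  refine ⟨6 * (c + 3), DepthTwoCert.verifier φ, fun n G hG ids hids =>
    ⟨DepthTwoCert.exists_cert_of_satSentence hG hids hφ, fun hsat cert => ?_⟩⟩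
  by_contra! h
  exact hsat (DepthTwoCert.satSentence_of_forall_verifier hG hids.1 cert fun v => by simpa using h v)

/-- Every FO sentence `φ` of quantifier depth at most `2` admits a
local certification scheme with certificates of size `O(log n)` bits on connected
graphs. -/
theorem qdepth2_local_certification (c : ℕ) (hc : 1 ≤ c)
    (φ : GraphFormula 0) (hφ : GraphFormula.qdepth φ ≤ 2) :
    ∃ (C : ℕ) (verify : ℕ → List Bool → Set (ℕ × List Bool) → Bool),
      ∀ (n : ℕ) (G : SimpleGraph (Fin n)), G.Connected →
        ∀ ids : Fin n → ℕ, ValidIds c ids →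
          ((SatSentence G φ →
              ∃ cert : Fin n → List Bool,
                (∀ v, (cert v).length ≤ C * (Nat.log 2 n + 1)) ∧
                ∀ v, verify (ids v) (cert v) (neighborsView G ids cert v) = true) ∧
            (¬ SatSentence G φ →
              ∀ cert : Fin n → List Bool,
                ∃ v, verify (ids v) (cert v) (neighborsView G ids cert v) = false)) :=
  qdepth2_local_certification_general c φ hφ
end

section
/- For every integer k and every existential first-order sentence of the form ∃x₁ … ∃x_k φ(x₁,…,x_k), where φ is quantifier-free, the property 'the connected graph G satisfies this sentence' admits a local certification scheme with certificates of size O(k log n) bits. -/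
/-! ### Auxiliary material for the certification scheme -/

section CertHelpers

/-- Little-endian fixed-width binary encoding of a natural number. -/
def natToBits (W x : ℕ) : List Bool := (List.range W).map x.testBit

/-- Decoding of a little-endian bit list. -/
def bitsToNat (l : List Bool) : ℕ := l.foldr (fun b acc => (cond b 1 0) + 2 * acc) 0

lemma length_natToBits (W x : ℕ) : (natToBits W x).length = W := by simp [natToBits]

lemma natToBits_succ (W x : ℕ) :
    natToBits (W + 1) x = x.testBit 0 :: natToBits W (x / 2) := by
  simp [natToBits, List.range_succ_eq_map, List.map_map, Function.comp_def, Nat.testBit_succ]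

lemma bitsToNat_cons (b : Bool) (l : List Bool) :
    bitsToNat (b :: l) = (cond b 1 0) + 2 * bitsToNat l := rfl

lemma bitsToNat_natToBits : ∀ (W x : ℕ), x < 2 ^ W → bitsToNat (natToBits W x) = x := by
  intro W
  induction W with
  | zero =>
    intro x hx
    interval_cases x
    simp [natToBits, bitsToNat]
  | succ W ih =>
    intro x hx
    have hx2 : x / 2 < 2 ^ W := by
      have h2 : 2 ^ (W + 1) = 2 * 2 ^ W := by ring
      omega
    rw [natToBits_succ, bitsToNat_cons, ih _ hx2]
    have h0 : (cond (x.testBit 0) 1 0 : ℕ) = x % 2 := by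
      rw [Nat.testBit_zero]
      rcases Nat.mod_two_eq_zero_or_one x with h | h <;> simp [h]
    rw [h0]
    omega

lemma blocks_get (W : ℕ) :
    ∀ (M : ℕ) (F : ℕ → ℕ) (j : ℕ), j < M →
      (((((List.range M).map fun i => natToBits W (F i)).flatten).drop (j * W)).take W)
        = natToBits W (F j) := by
  intro M
  induction M with
  | zero => omega
  | succ M ih =>
    intro F j hj
    rw [List.range_succ_eq_map, List.map_cons, List.map_map, List.flatten_cons]
    cases j with
    | zero =>
      simp only [Nat.zero_mul, List.drop_zero]
      exact List.take_left' (length_natToBits _ _)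
    | succ j =>
      have hm : (j + 1) * W = W + j * W := by ring
      rw [hm, ← List.drop_drop, List.drop_left' (length_natToBits _ _)]
      have := ih (fun i => F (i + 1)) j (by omega)
      simpa [Function.comp_def] using this

lemma blocks_length (W M : ℕ) (F : ℕ → ℕ) :
    (((List.range M).map fun i => natToBits W (F i)).flatten).length = M * W := by
  rw [List.length_flatten, List.map_map]
  have : (List.map (List.length ∘ fun i => natToBits W (F i)) (List.range M))
      = List.replicate M W := by
    rw [List.eq_replicate_iff]
    constructor
    · simp
    · intro b hb
      simp only [List.mem_map, Function.comp_apply] at hb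
      obtain ⟨i, _, rfl⟩ := hb
      exact length_natToBits _ _
  rw [this, List.sum_replicate, smul_eq_mul]

/-- The `j`-th field of a certificate, where the block width is computed
from the total length. -/
def fld (M : ℕ) (l : List Bool) (j : ℕ) : ℕ :=
  bitsToNat ((l.drop (j * (l.length / M))).take (l.length / M))

/-- Evaluation of a quantifier-free formula, given boolean tables for the
equality and adjacency atoms. -/
def evalQF : ∀ {m : ℕ}, GraphFormula m → (Fin m → Fin m → Bool) → (Fin m → Fin m → Bool) → Bool
  | _, .eq i j, e, _ => e i j
  | _, .adj i j, _, ad => ad i j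
  | _, .not f, e, ad => !(evalQF f e ad)
  | _, .and f g, e, ad => evalQF f e ad && evalQF g e ad
  | _, .or f g, e, ad => evalQF f e ad || evalQF g e ad
  | _, .all _, _, _ => false
  | _, .ex _, _, _ => false

lemma evalQF_correct {V : Type*} (G : SimpleGraph V) {m : ℕ} (φ : GraphFormula m) :
    φ.qdepth = 0 →
      ∀ (a : Fin m → V) (e ad : Fin m → Fin m → Bool),
        (∀ i j, e i j = true ↔ a i = a j) →
        (∀ i j, ad i j = true ↔ G.Adj (a i) (a j)) →
        (evalQF φ e ad = true ↔ GraphFormula.Sat G φ a) := by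
  induction φ with
  | eq i j =>
    intro _ a e ad he _
    simpa [evalQF, GraphFormula.Sat] using he i j
  | adj i j =>
    intro _ a e ad _ ha
    simpa [evalQF, GraphFormula.Sat] using ha i j
  | not f ihf =>
    intro h a e ad he ha
    simp only [GraphFormula.qdepth] at h
    have hx := ihf h a e ad he ha
    simp [evalQF, GraphFormula.Sat, ← hx]
  | and f g ihf ihg =>
    intro h a e ad he ha
    simp only [GraphFormula.qdepth, Nat.max_eq_zero_iff] at h
    simp [evalQF, GraphFormula.Sat, Bool.and_eq_true,
      ihf h.1 a e ad he ha, ihg h.2 a e ad he ha]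
  | or f g ihf ihg =>
    intro h a e ad he ha
    simp only [GraphFormula.qdepth, Nat.max_eq_zero_iff] at h
    simp [evalQF, GraphFormula.Sat, Bool.or_eq_true,
      ihf h.1 a e ad he ha, ihg h.2 a e ad he ha]
  | all f ih =>
    intro h
    simp [GraphFormula.qdepth] at h
  | ex f ih =>
    intro h
    simp [GraphFormula.qdepth] at h

lemma no_qf_sentence_aux : ∀ {m : ℕ} (φ : GraphFormula m), φ.qdepth = 0 → m = 0 → False := by
  intro m φ
  induction φ with
  | eq i j => intro _ hm; subst hm; exact i.elim0
  | adj i j => intro _ hm; subst hm; exact i.elim0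
  | not f ihf => intro h hm; exact ihf (by simpa [GraphFormula.qdepth] using h) hm
  | and f g ihf ihg =>
    intro h hm
    simp only [GraphFormula.qdepth, Nat.max_eq_zero_iff] at h
    exact ihf h.1 hm
  | or f g ihf ihg =>
    intro h hm
    simp only [GraphFormula.qdepth, Nat.max_eq_zero_iff] at h
    exact ihf h.1 hm
  | all f ih => intro h _; simp [GraphFormula.qdepth] at h
  | ex f ih => intro h _; simp [GraphFormula.qdepth] at h

lemma no_qf_sentence (φ : GraphFormula 0) (h : φ.qdepth = 0) : False :=
  no_qf_sentence_aux φ h rfl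

lemma sat_exClosure {V : Type*} (G : SimpleGraph V) :
    ∀ {m : ℕ} (φ : GraphFormula m),
      SatSentence G φ.exClosure ↔ ∃ a : Fin m → V, GraphFormula.Sat G φ a := by
  intro m
  induction m with
  | zero =>
    intro φ
    constructor
    · intro h; exact ⟨Fin.elim0, h⟩
    · rintro ⟨a, ha⟩
      have : a = Fin.elim0 := funext fun i => i.elim0
      rw [this] at ha
      exact ha
  | succ m ih =>
    intro φ
    have h1 : φ.exClosure = (GraphFormula.ex φ).exClosure := rfl
    rw [h1, ih (GraphFormula.ex φ)]
    constructor
    · rintro ⟨a, v, hv⟩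
      exact ⟨Fin.snoc a v, hv⟩
    · rintro ⟨b, hb⟩
      refine ⟨fun i => b i.castSucc, b (Fin.last m), ?_⟩
      have hb' : (Fin.snoc (fun i => b i.castSucc) (b (Fin.last m)) : Fin (m+1) → V) = b := by
        funext i
        refine Fin.lastCases ?_ ?_ i <;> simp
      rw [hb']
      exact hb

lemma idx_lt {k : ℕ} (i j : Fin k) : 2 * k + ↑i * k + ↑j < 2 * k + k * k := by
  have h1 : (↑i + 1) * k ≤ k * k := by
    have := Nat.mul_le_mul_right k (Nat.succ_le_of_lt i.isLt)
    simpa [Nat.mul_comm] using this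
  have h2 : ↑i * k + k = (↑i + 1) * k := by ring
  have := j.isLt
  omega

lemma idx_div {k : ℕ} (hk : 0 < k) (i j : Fin k) : (↑i * k + ↑j) / k = (↑i : ℕ) := by
  rw [Nat.mul_comm, Nat.mul_add_div hk, Nat.div_eq_of_lt j.isLt]
  omega

lemma idx_mod {k : ℕ} (hk : 0 < k) (i j : Fin k) : (↑i * k + ↑j) % k = (↑j : ℕ) := by
  rw [Nat.mul_comm, Nat.mul_add_mod]
  exact Nat.mod_eq_of_lt j.isLt

/-- The verification condition of the certification scheme. -/
def VerProp (k : ℕ) (φ : GraphFormula k) (idv : ℕ) (cert : List Bool)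
    (view : Set (ℕ × List Bool)) : Prop :=
  (∀ p ∈ view, (∀ i : Fin k, fld (2*k + k*k) p.2 ↑i = fld (2*k + k*k) cert ↑i) ∧
      ∀ i j : Fin k, (fld (2*k + k*k) p.2 (2*k + ↑i*k + ↑j) = 1 ↔
        fld (2*k + k*k) cert (2*k + ↑i*k + ↑j) = 1)) ∧
  evalQF φ (fun i j => decide (fld (2*k + k*k) cert ↑i = fld (2*k + k*k) cert ↑j))
    (fun i j => decide (fld (2*k + k*k) cert (2*k + ↑i*k + ↑j) = 1)) = true ∧
  ∀ i : Fin k,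
    (fld (2*k + k*k) cert (k + ↑i) = 0 →
      idv = fld (2*k + k*k) cert ↑i ∧
      ∀ j : Fin k, (fld (2*k + k*k) cert (2*k + ↑i*k + ↑j) = 1 ↔
        ∃ p ∈ view, p.1 = fld (2*k + k*k) cert ↑j)) ∧
    (fld (2*k + k*k) cert (k + ↑i) ≠ 0 →
      ∃ p ∈ view, fld (2*k + k*k) p.2 (k + ↑i) = fld (2*k + k*k) cert (k + ↑i) - 1)

open scoped Classical in
/-- The verifier of the certification scheme. -/
noncomputable def verifyE (k : ℕ) (φ : GraphFormula k) (idv : ℕ) (cert : List Bool)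
    (view : Set (ℕ × List Bool)) : Bool :=
  decide (VerProp k φ idv cert view)

lemma dist_lt_card {n : ℕ} {G : SimpleGraph (Fin n)} (hG : G.Connected) (v u : Fin n) :
    G.dist v u < n := by
  obtain ⟨q⟩ := hG.preconnected v u
  calc G.dist v u ≤ q.bypass.length := SimpleGraph.dist_le _
    _ < Fintype.card (Fin n) := q.bypass_isPath.length_lt
    _ = n := Fintype.card_fin n

lemma exists_adj_dist {n : ℕ} {G : SimpleGraph (Fin n)} (hG : G.Connected)
    (v u : Fin n) (d : ℕ) (hd : G.dist v u = d + 1) :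
    ∃ w, G.Adj v w ∧ G.dist w u = d := by
  obtain ⟨p, hp⟩ := hG.exists_walk_length_eq_dist v u
  rw [hd] at hp
  cases p with
  | nil => simp at hp
  | @cons _ w _ hadj q =>
    rw [SimpleGraph.Walk.length_cons] at hp
    refine ⟨w, hadj, le_antisymm ?_ ?_⟩
    · have := SimpleGraph.dist_le q
      omega
    · have h1 : G.dist v u ≤ G.dist v w + G.dist w u := hG.dist_triangle
      have h2 : G.dist v w ≤ 1 := by
        have := SimpleGraph.dist_le hadj.toWalk
        simpa using this
      omega

end CertHelpers

lemma existential_fo_local_certification_pos (c : ℕ) (hc : 1 ≤ c)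
    (k : ℕ) (hk : 0 < k) (φ : GraphFormula k) (hφ : GraphFormula.qdepth φ = 0) :
    ∃ (C : ℕ) (verify : ℕ → List Bool → Set (ℕ × List Bool) → Bool),
      ∀ (n : ℕ) (G : SimpleGraph (Fin n)), G.Connected →
        ∀ ids : Fin n → ℕ, ValidIds c ids →
          ((SatSentence G φ.exClosure →
              ∃ cert : Fin n → List Bool,
                (∀ v, (cert v).length ≤ C * k * (Nat.log 2 n + 1)) ∧
                ∀ v, verify (ids v) (cert v) (neighborsView G ids cert v) = true) ∧
            (¬ SatSentence G φ.exClosure →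
              ∀ cert : Fin n → List Bool,
                ∃ v, verify (ids v) (cert v) (neighborsView G ids cert v) = false)) := by
  classical
refine ⟨(k + 2) * c, verifyE k φ, ?_⟩
intro n G hG ids hids
have hn : 0 < n := by
  obtain ⟨v⟩ := hG.nonempty
  exact v.pos
set M := 2 * k + k * k with hMdef
have hM : 0 < M := by omega
set W := c * (Nat.log 2 n + 1) with hWdef
have hW1 : 1 ≤ W := by
  have h1 : 1 ≤ Nat.log 2 n + 1 := by omega
  calc 1 = 1 * 1 := rfl
    _ ≤ c * (Nat.log 2 n + 1) := Nat.mul_le_mul hc h1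
have hpow : n ^ c < 2 ^ W := by
  have h1 : n < 2 ^ (Nat.log 2 n + 1) := Nat.lt_pow_succ_log_self (by norm_num) n
  calc n ^ c < (2 ^ (Nat.log 2 n + 1)) ^ c := Nat.pow_lt_pow_left h1 (by omega)
    _ = 2 ^ W := by rw [← pow_mul, hWdef, Nat.mul_comm]
have hnc : n ≤ n ^ c := Nat.le_self_pow (by omega) n
constructor
· -- Completeness
  intro hsat
  obtain ⟨a, ha⟩ := (sat_exClosure G φ).mp hsat
  set F : Fin n → ℕ → ℕ := fun v j =>
    if h1 : j < k then ids (a ⟨j, h1⟩)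
    else if h2 : j < 2 * k then G.dist v (a ⟨j - k, by omega⟩)
    else if h3 : j < 2 * k + k * k then
      (if G.Adj (a ⟨(j - 2 * k) / k, (Nat.div_lt_iff_lt_mul hk).mpr (by omega)⟩)
        (a ⟨(j - 2 * k) % k, Nat.mod_lt _ hk⟩) then 1 else 0)
    else 0
    with hFdef
  set cert : Fin n → List Bool := fun v =>
      ((List.range M).map fun j => natToBits W (F v j)).flatten with hcert
  have hlen : ∀ v, (cert v).length = M * W := fun v => blocks_length W M (F v)
  have hFlt : ∀ v j, F v j < 2 ^ W := by
    intro v j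
    have h2W : (1:ℕ) < 2 ^ W := Nat.one_lt_two_pow (by omega)
    simp only [hFdef]
    split_ifs with h1 h2 h3 h4
    · exact lt_of_le_of_lt (hids.2 _).2 hpow
    · exact lt_of_lt_of_le (dist_lt_card hG _ _) (le_of_lt (lt_of_le_of_lt hnc hpow))
    · exact h2W
    · omega
    · omega
  have hfld : ∀ v j, j < M → fld M (cert v) j = F v j := by
    intro v j hj
    unfold fld
    rw [hlen v, Nat.mul_div_cancel_left _ hM, hcert]
    simp only []
    rw [blocks_get W M (F v) j hj, bitsToNat_natToBits W _ (hFlt v j)]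
  have hwid : ∀ (v : Fin n) (i : Fin k), fld M (cert v) ↑i = ids (a i) := by
    intro v i
    rw [hfld v ↑i (by have := i.isLt; omega)]
    simp only [hFdef]
    rw [dif_pos i.isLt]
  have hdst : ∀ (v : Fin n) (i : Fin k), fld M (cert v) (k + ↑i) = G.dist v (a i) := by
    intro v i
    rw [hfld v _ (by have := i.isLt; omega)]
    simp only [hFdef]
    rw [dif_neg (by omega), dif_pos (by have := i.isLt; omega)]
    simp only [Nat.add_sub_cancel_left, Fin.eta]
  have hprf : ∀ (v : Fin n) (i j : Fin k),
      (fld M (cert v) (2 * k + ↑i * k + ↑j) = 1 ↔ G.Adj (a i) (a j)) := by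
    intro v i j
    have hlt := idx_lt i j
    rw [hfld v _ (by rw [hMdef]; exact hlt)]
    simp only [hFdef]
    rw [dif_neg (by omega), dif_neg (by omega), dif_pos hlt]
    have e1 : 2 * k + ↑i * k + ↑j - 2 * k = ↑i * k + ↑j := by omega
    have hii : (2 * k + ↑i * k + ↑j - 2 * k) / k = (↑i : ℕ) := by rw [e1, idx_div hk]
    have hjj : (2 * k + ↑i * k + ↑j - 2 * k) % k = (↑j : ℕ) := by rw [e1, idx_mod hk]
    simp only [hii, hjj, Fin.eta]
    split_ifs with hA <;> simp [hA]
  refine ⟨cert, ?_, ?_⟩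
  · intro v
    rw [hlen v]
    have heq : M * W = ((k + 2) * c) * k * (Nat.log 2 n + 1) := by
      rw [hMdef, hWdef]; ring
    rw [heq]
  · intro v
    rw [verifyE, decide_eq_true_eq]
    unfold VerProp
    rw [← hMdef]
    refine ⟨?_, ?_, ?_⟩
    · rintro p ⟨u, hu, rfl⟩
      exact ⟨fun i => by rw [hwid, hwid],
        fun i j => by rw [hprf, hprf]⟩
    · refine (evalQF_correct G φ hφ a _ _ ?_ ?_).mpr ha
      · intro i j
        simp only [decide_eq_true_eq]
        rw [hwid, hwid]
        exact hids.1.eq_iff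
      · intro i j
        simp only [decide_eq_true_eq]
        exact hprf v i j
    · intro i
      constructor
      · intro h0
        rw [hdst] at h0
        have hva : v = a i := hG.dist_eq_zero_iff.mp h0
        constructor
        · rw [hwid, hva]
        · intro j
          rw [hprf]
          constructor
          · intro hA
            refine ⟨(ids (a j), cert (a j)), ⟨a j, ?_, rfl⟩, by rw [hwid]⟩
            rw [hva]
            exact hA
          · rintro ⟨p, ⟨u, hu, rfl⟩, hp1⟩
            rw [hwid] at hp1
            have huj : u = a j := hids.1 hp1
            rw [hva, huj] at hu
            exact hu
      · intro hne
        rw [hdst] at hne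
        obtain ⟨d, hd⟩ : ∃ d, G.dist v (a i) = d + 1 := ⟨G.dist v (a i) - 1, by omega⟩
        obtain ⟨w, hw, hwd⟩ := exists_adj_dist hG v (a i) d hd
        refine ⟨(ids w, cert w), ⟨w, hw, rfl⟩, ?_⟩
        rw [hdst, hdst, hwd, hd]
        omega
· -- Soundness
  intro hns cert
  by_contra hno
  push_neg at hno
  have hacc : ∀ v, VerProp k φ (ids v) (cert v) (neighborsView G ids cert v) := by
    intro v
    have hbv : verifyE k φ (ids v) (cert v) (neighborsView G ids cert v) = true := by
      cases hb : verifyE k φ (ids v) (cert v) (neighborsView G ids cert v)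
      · exact absurd hb (hno v)
      · rfl
    rwa [verifyE, decide_eq_true_eq] at hbv
  simp only [VerProp, ← hMdef] at hacc
  have hstep : ∀ v u, G.Adj v u →
      (∀ i : Fin k, fld M (cert u) ↑i = fld M (cert v) ↑i) ∧
      (∀ i j : Fin k, (fld M (cert u) (2 * k + ↑i * k + ↑j) = 1 ↔
        fld M (cert v) (2 * k + ↑i * k + ↑j) = 1)) := by
    intro v u hadj
    exact (hacc v).1 (ids u, cert u) ⟨u, hadj, rfl⟩
  set v₀ : Fin n := ⟨0, hn⟩ with hv₀
  have hreach' : ∀ (v u : Fin n), G.Walk v u →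
      (∀ i : Fin k, fld M (cert v) ↑i = fld M (cert u) ↑i) ∧
      (∀ i j : Fin k, (fld M (cert v) (2 * k + ↑i * k + ↑j) = 1 ↔
        fld M (cert u) (2 * k + ↑i * k + ↑j) = 1)) := by
    intro v u p
    induction p with
    | nil => exact ⟨fun _ => rfl, fun _ _ => Iff.rfl⟩
    | cons hadj q ih =>
      obtain ⟨h1, h2⟩ := hstep _ _ hadj
      obtain ⟨ih1, ih2⟩ := ih
      exact ⟨fun i => ((h1 i).symm).trans (ih1 i),
        fun i j => ((h2 i j).symm).trans (ih2 i j)⟩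
  have hreach : ∀ v : Fin n,
      (∀ i : Fin k, fld M (cert v) ↑i = fld M (cert v₀) ↑i) ∧
      (∀ i j : Fin k, (fld M (cert v) (2 * k + ↑i * k + ↑j) = 1 ↔
        fld M (cert v₀) (2 * k + ↑i * k + ↑j) = 1)) := fun v =>
    hreach' v v₀ (hG.preconnected v v₀).some
  have hwit : ∀ i : Fin k, ∃ w : Fin n, ids w = fld M (cert v₀) ↑i ∧
      ∀ j : Fin k, (fld M (cert w) (2 * k + ↑i * k + ↑j) = 1 ↔
        ∃ u, G.Adj w u ∧ ids u = fld M (cert v₀) ↑j) := by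
    intro i
    obtain ⟨w, -, hmin⟩ := Finset.exists_min_image Finset.univ
      (fun v => fld M (cert v) (k + ↑i)) ⟨v₀, Finset.mem_univ _⟩
    by_cases h0 : fld M (cert w) (k + ↑i) = 0
    · obtain ⟨hid, hrow⟩ := ((hacc w).2.2 i).1 h0
      refine ⟨w, by rw [hid, (hreach w).1 i], ?_⟩
      intro j
      rw [hrow j]
      constructor
      · rintro ⟨p, ⟨u, hu, rfl⟩, hp1⟩
        refine ⟨u, hu, ?_⟩
        simp only at hp1
        rw [hp1]
        exact (hreach w).1 j
      · rintro ⟨u, hu, hu1⟩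
        refine ⟨(ids u, cert u), ⟨u, hu, rfl⟩, ?_⟩
        show ids u = fld M (cert w) ↑j
        rw [hu1]
        exact ((hreach w).1 j).symm
    · exfalso
      obtain ⟨p, ⟨u, hu, rfl⟩, hp⟩ := ((hacc w).2.2 i).2 h0
      have hm := hmin u (Finset.mem_univ _)
      simp only at hm hp
      omega
  choose a ha1 ha2 using hwit
  have hSat : GraphFormula.Sat G φ a := by
    have hv0 := (hacc v₀).2.1
    refine (evalQF_correct G φ hφ a _ _ ?_ ?_).mp hv0
    · intro i j
      simp only [decide_eq_true_eq]
      rw [← ha1 i, ← ha1 j]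
      exact hids.1.eq_iff
    · intro i j
      simp only [decide_eq_true_eq]
      constructor
      · intro h1
        have h2 : fld M (cert (a i)) (2 * k + ↑i * k + ↑j) = 1 :=
          ((hreach (a i)).2 i j).mpr h1
        obtain ⟨u, hu, hu1⟩ := (ha2 i j).mp h2
        have huj : u = a j := hids.1 (hu1.trans (ha1 j).symm)
        rwa [← huj]
      · intro hA
        have h2 : fld M (cert (a i)) (2 * k + ↑i * k + ↑j) = 1 :=
          (ha2 i j).mpr ⟨a j, hA, ha1 j⟩
        exact ((hreach (a i)).2 i j).mp h2
  exact hns ((sat_exClosure G φ).mpr ⟨a, hSat⟩)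

/-- For every integer `k` and every existential FO sentence
`∃x₁ … ∃x_k φ(x₁,…,x_k)` with `φ` quantifier-free, the property "the connected graph
`G` satisfies this sentence" admits a local certification scheme with certificates of
size `O(k log n)` bits. -/
theorem existential_fo_local_certification (c : ℕ) (hc : 1 ≤ c)
    (k : ℕ) (φ : GraphFormula k) (hφ : GraphFormula.qdepth φ = 0) :
    ∃ (C : ℕ) (verify : ℕ → List Bool → Set (ℕ × List Bool) → Bool),
      ∀ (n : ℕ) (G : SimpleGraph (Fin n)), G.Connected →
        ∀ ids : Fin n → ℕ, ValidIds c ids →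
          ((SatSentence G φ.exClosure →
              ∃ cert : Fin n → List Bool,
                (∀ v, (cert v).length ≤ C * k * (Nat.log 2 n + 1)) ∧
                ∀ v, verify (ids v) (cert v) (neighborsView G ids cert v) = true) ∧
            (¬ SatSentence G φ.exClosure →
              ∀ cert : Fin n → List Bool,
                ∃ v, verify (ids v) (cert v) (neighborsView G ids cert v) = false)) := by
  cases k with
  | zero => exact (no_qf_sentence φ hφ).elim
  | succ K => exact existential_fo_local_certification_pos c hc (K + 1) (Nat.succ_pos K) φ hφ
end

section
/- Let T be a coherent d-model of a connected graph G and let u be any vertex of G. Then the set of vertices of the subtree of T rooted at u induces a connected subgraph of G. -/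
section Aux

variable {V : Type}

lemma ElimTree.isAncestor_trans (T : ElimTree V) {a b c : V}
    (h1 : T.IsAncestor a b) (h2 : T.IsAncestor b c) : T.IsAncestor a c := by
  obtain ⟨i, hi⟩ := h1
  obtain ⟨j, hj⟩ := h2
  exact ⟨i + j, by rw [Function.iterate_add_apply, hj, hi]⟩

lemma ElimTree.depth_parent_lt (T : ElimTree V) {w : V} (hw : w ≠ T.root) :
    T.depth (T.parent w) < T.depth w := by
  have hne : {j : ℕ | T.parent^[j] w = T.root}.Nonempty := T.reaches_root w
  have hmem : T.parent^[T.depth w] w = T.root := Nat.sInf_mem hne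
  have hd0 : T.depth w ≠ 0 := by
    intro h0
    rw [h0] at hmem
    exact hw hmem
  have hle : T.depth (T.parent w) ≤ T.depth w - 1 := by
    apply Nat.sInf_le
    show T.parent^[T.depth w - 1] (T.parent w) = T.root
    rw [← Function.iterate_succ_apply, Nat.succ_eq_add_one, Nat.sub_add_cancel (Nat.one_le_iff_ne_zero.mpr hd0)]
    exact hmem
  omega

lemma reach_mono (G : SimpleGraph V) {A B : Set V} (h : A ⊆ B)
    {x y : V} (hx : x ∈ A) (hy : y ∈ A)
    (hr : (G.induce A).Reachable ⟨x, hx⟩ ⟨y, hy⟩) :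
    (G.induce B).Reachable ⟨x, h hx⟩ ⟨y, h hy⟩ :=
  hr.map ⟨Set.inclusion h, fun {a b} hab => hab⟩

lemma coherent_key (G : SimpleGraph V) (T : ElimTree V) (d : ℕ)
    (hT : IsModelOfDepth T G d) (hcoh : Coherent T G) :
    ∀ m : ℕ, ∀ v : V, d - T.depth v ≤ m → ∀ x (hx : T.IsAncestor v x),
      (G.induce {z | T.IsAncestor v z}).Reachable ⟨x, hx⟩ ⟨v, ⟨0, rfl⟩⟩ := by
  classical
  intro m
  induction m with
  | zero =>
    intro v hv x hx
    rcases eq_or_ne x v with rfl | hne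
    · rfl
    · exfalso
      -- find child w of v with x in subtree of w
      have hex : ∃ j, T.parent^[j] x = v := hx
      set j0 := Nat.find hex with hj0
      have hj0spec : T.parent^[j0] x = v := Nat.find_spec hex
      have hj0pos : j0 ≠ 0 := by
        intro h0; rw [h0] at hj0spec; exact hne hj0spec
      set w := T.parent^[j0 - 1] x with hw
      have hpw : T.parent w = v := by
        have h1 : T.parent (T.parent^[j0 - 1] x) = T.parent^[j0 - 1 + 1] x :=
          (Function.iterate_succ_apply' T.parent (j0 - 1) x).symm
        rw [hw, h1, Nat.sub_add_cancel (Nat.one_le_iff_ne_zero.mpr hj0pos)]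
        exact hj0spec
      have hwne : w ≠ v := fun hwv => Nat.find_min hex (by omega : j0 - 1 < j0) hwv
      have hwroot : w ≠ T.root := by
        intro hr
        rw [hr] at hpw
        rw [T.parent_root] at hpw
        exact hwne (hr.trans hpw)
      have h1 : T.depth (T.parent w) < T.depth w := T.depth_parent_lt hwroot
      have h2 : T.depth w ≤ d := hT.1 w
      rw [hpw] at h1
      omega
  | succ m ih =>
    intro v hv x hx
    rcases eq_or_ne x v with rfl | hne
    · rfl
    · have hex : ∃ j, T.parent^[j] x = v := hx
      set j0 := Nat.find hex with hj0
      have hj0spec : T.parent^[j0] x = v := Nat.find_spec hex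
      have hj0pos : j0 ≠ 0 := by
        intro h0; rw [h0] at hj0spec; exact hne hj0spec
      set w := T.parent^[j0 - 1] x with hw
      have hpw : T.parent w = v := by
        have h1 : T.parent (T.parent^[j0 - 1] x) = T.parent^[j0 - 1 + 1] x :=
          (Function.iterate_succ_apply' T.parent (j0 - 1) x).symm
        rw [hw, h1, Nat.sub_add_cancel (Nat.one_le_iff_ne_zero.mpr hj0pos)]
        exact hj0spec
      have hwne : w ≠ v := fun hwv => Nat.find_min hex (by omega : j0 - 1 < j0) hwv
      have hwroot : w ≠ T.root := by
        intro hr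
        rw [hr] at hpw
        rw [T.parent_root] at hpw
        exact hwne (hr.trans hpw)
      have hdep : T.depth v < T.depth w := by
        have := T.depth_parent_lt hwroot
        rwa [hpw] at this
      have hvm : d - T.depth w ≤ m := by omega
      -- x is in subtree of w
      have hwx : T.IsAncestor w x := ⟨j0 - 1, rfl⟩
      have hsub : {z | T.IsAncestor w z} ⊆ {z | T.IsAncestor v z} := by
        intro z hz
        exact T.isAncestor_trans ⟨1, by simpa using hpw⟩ hz
      -- x reachable to w within subtree of w
      have hr1 := ih w hvm x hwx
      -- coherence at w gives y adjacent to v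
      obtain ⟨y, hwy, hadj⟩ := hcoh w hwroot
      rw [hpw] at hadj
      have hr2 := ih w hvm y hwy
      have hxv : T.IsAncestor v x := hx
      have hrefl : T.IsAncestor w w := ⟨0, rfl⟩
      have hR1 : (G.induce {z | T.IsAncestor v z}).Reachable ⟨x, hsub hwx⟩ ⟨w, hsub hrefl⟩ :=
        reach_mono G hsub hwx hrefl hr1
      have hR2 : (G.induce {z | T.IsAncestor v z}).Reachable ⟨y, hsub hwy⟩ ⟨w, hsub hrefl⟩ :=
        reach_mono G hsub hwy hrefl hr2
      have hedge : (G.induce {z | T.IsAncestor v z}).Adj ⟨y, hsub hwy⟩ ⟨v, ⟨0, rfl⟩⟩ := hadj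
      exact hR1.trans (hR2.symm.trans hedge.reachable)

end Aux

/-- If `T` is a coherent `d`-model of a connected graph `G` and `u` is
any vertex, then the vertex set of the subtree of `T` rooted at `u` induces a connected
subgraph of `G`. -/
theorem coherent_subtree_connected {V : Type} [Fintype V] (G : SimpleGraph V)
    (hG : G.Connected) (d : ℕ) (T : ElimTree V)
    (hT : IsModelOfDepth T G d) (hcoh : Coherent T G) (u : V) :
    (G.induce {x | T.IsAncestor u x}).Connected := by
  rw [SimpleGraph.connected_iff]
  constructor
  · intro a b
    have ha := coherent_key G T d hT hcoh d u (by omega) a.1 a.2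
    have hb := coherent_key G T d hT hcoh d u (by omega) b.1 b.2
    exact ha.trans hb.symm
  · exact ⟨⟨u, ⟨0, rfl⟩⟩⟩
end

section
/- Let G be a connected graph with a t-model T, let k be an integer, and let H be a k-reduced graph of G obtained via valid prunings from T. Then G ≃_k H, i.e., G and H satisfy exactly the same first-order sentences of quantifier depth at most k. -/
/-! ### Auxiliary lemmas -/

namespace KRAux

open ElimTree

variable {V : Type*} (T : ElimTree V)

lemma iter_root (j : ℕ) : T.parent^[j] T.root = T.root := by
  induction j with
  | zero => rfl
  | succ j ih => rw [Function.iterate_succ_apply', ih, T.parent_root]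

lemma depth_spec (v : V) : T.parent^[T.depth v] v = T.root :=
  Nat.sInf_mem (T.reaches_root v)

lemma depth_le {v : V} {j : ℕ} (h : T.parent^[j] v = T.root) : T.depth v ≤ j :=
  Nat.sInf_le h

lemma depth_eq_zero_iff {v : V} : T.depth v = 0 ↔ v = T.root := by
  constructor
  · intro h
    have := depth_spec T v
    rwa [h] at this
  · rintro rfl
    exact Nat.le_antisymm (depth_le T (by rfl)) (Nat.zero_le _)

lemma depth_parent {v : V} (h : v ≠ T.root) :
    T.depth (T.parent v) + 1 = T.depth v := by
  have hd : T.depth v ≠ 0 := fun h0 => h ((depth_eq_zero_iff T).1 h0)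
  have h1 : T.parent^[T.depth v - 1] (T.parent v) = T.root := by
    rw [← Function.iterate_succ_apply, Nat.succ_eq_add_one, Nat.sub_add_cancel
      (Nat.one_le_iff_ne_zero.2 hd)]
    exact depth_spec T v
  have h2 : T.depth (T.parent v) ≤ T.depth v - 1 := depth_le T h1
  have h3 : T.depth v ≤ T.depth (T.parent v) + 1 := by
    apply depth_le T
    rw [Function.iterate_succ_apply]
    exact depth_spec T (T.parent v)
  omega

lemma depth_iterate {v : V} {j : ℕ} (h : j ≤ T.depth v) :
    T.depth (T.parent^[j] v) = T.depth v - j := by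
  induction j with
  | zero => simp
  | succ j ih =>
    have hj : j ≤ T.depth v := by omega
    have hne : T.parent^[j] v ≠ T.root := by
      intro hr
      have := (depth_eq_zero_iff T).2 hr
      rw [ih hj] at this
      omega
    have h2 := depth_parent T hne
    have h3 := ih hj
    rw [Function.iterate_succ_apply']
    omega

lemma iterate_past {v : V} {j : ℕ} (h : T.depth v ≤ j) :
    T.parent^[j] v = T.root := by
  have : T.parent^[(j - T.depth v) + T.depth v] v = T.root := by
    rw [Function.iterate_add_apply, depth_spec T v]
    exact iter_root T _
  rwa [Nat.sub_add_cancel h] at this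

/-- The canonical witness of the ancestor relation: the depth difference. -/
lemma ancestor_canonical {u v : V} (h : T.IsAncestor u v) (hu : u ≠ T.root) :
    T.depth u ≤ T.depth v ∧ T.parent^[T.depth v - T.depth u] v = u ∧
      ∀ j, T.parent^[j] v = u → j = T.depth v - T.depth u := by
  obtain ⟨j, hj⟩ := h
  have hjlt : j < T.depth v := by
    by_contra hge
    push_neg at hge
    exact hu (hj ▸ iterate_past T hge)
  have hdu : T.depth u = T.depth v - j := hj ▸ depth_iterate T hjlt.le
  have hjval : j = T.depth v - T.depth u := by omega
  refine ⟨by omega, by rw [← hjval]; exact hj, ?_⟩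
  intro j' hj'
  have hj'lt : j' < T.depth v := by
    by_contra hge
    push_neg at hge
    exact hu (hj' ▸ iterate_past T hge)
  have : T.depth u = T.depth v - j' := hj' ▸ depth_iterate T hj'lt.le
  omega

lemma isAncestor_trans {a b c : V} (h1 : T.IsAncestor a b) (h2 : T.IsAncestor b c) :
    T.IsAncestor a c := by
  obtain ⟨j, hj⟩ := h1
  obtain ⟨j', hj'⟩ := h2
  exact ⟨j + j', by rw [Function.iterate_add_apply, hj', hj]⟩

lemma isAncestor_refl (v : V) : T.IsAncestor v v := ⟨0, rfl⟩

/-- Two ancestors of the same vertex are comparable. -/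
lemma ancestors_comparable {x y y' : V} (h : T.IsAncestor y x) (h' : T.IsAncestor y' x) :
    T.IsAncestor y y' ∨ T.IsAncestor y' y := by
  obtain ⟨j, hj⟩ := h
  obtain ⟨j', hj'⟩ := h'
  rcases le_total j j' with hle | hle
  · right
    exact ⟨j' - j, by rw [← hj, ← Function.iterate_add_apply, Nat.sub_add_cancel hle, hj']⟩
  · left
    exact ⟨j - j', by rw [← hj', ← Function.iterate_add_apply, Nat.sub_add_cancel hle, hj]⟩

lemma ancestor_eq_of_depth_eq {u v : V} (h : T.IsAncestor u v) (hu : u ≠ T.root)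
    (hd : T.depth u = T.depth v) : u = v := by
  have := (ancestor_canonical T h hu).2.1
  rw [hd, Nat.sub_self] at this
  exact this.symm

lemma root_not_strict {u : V} (h : T.IsAncestor u T.root) (hu : u ≠ T.root) : False := by
  obtain ⟨j, hj⟩ := h
  exact hu (by rw [← hj, iter_root])

/-- `S` is closed under taking ancestors. -/
def AncClosed (S : Set V) : Prop := ∀ x ∈ S, ∀ j : ℕ, T.parent^[j] x ∈ S

/-- The generic Ehrenfeucht–Fraïssé back-and-forth lemma. -/
theorem ef_lemma {V₁ V₂ : Type*} (G₁ : SimpleGraph V₁) (G₂ : SimpleGraph V₂) (k : ℕ)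
    (Good : ∀ n : ℕ, (Fin n → V₁) → (Fin n → V₂) → Prop)
    (heq : ∀ n a b, Good n a b → ∀ i j, a i = a j ↔ b i = b j)
    (hadj : ∀ n a b, Good n a b → ∀ i j, G₁.Adj (a i) (a j) ↔ G₂.Adj (b i) (b j))
    (hforth : ∀ n a b, Good n a b → n < k →
      ∀ v, ∃ w, Good (n + 1) (Fin.snoc a v) (Fin.snoc b w))
    (hback : ∀ n a b, Good n a b → n < k →
      ∀ w, ∃ v, Good (n + 1) (Fin.snoc a v) (Fin.snoc b w)) :
    ∀ {n : ℕ} (φ : GraphFormula n) (a : Fin n → V₁) (b : Fin n → V₂),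
      n + φ.qdepth ≤ k → Good n a b →
      (GraphFormula.Sat G₁ φ a ↔ GraphFormula.Sat G₂ φ b) := by
  intro n φ
  induction φ with
  | eq i j =>
    intro a b _ hg
    exact heq _ a b hg i j
  | adj i j =>
    intro a b _ hg
    exact hadj _ a b hg i j
  | not f ih =>
    intro a b hd hg
    simp only [GraphFormula.Sat]
    rw [ih a b hd hg]
  | and f g ihf ihg =>
    intro a b hd hg
    simp only [GraphFormula.qdepth] at hd
    simp only [GraphFormula.Sat]
    rw [ihf a b (by omega) hg, ihg a b (by omega) hg]
  | or f g ihf ihg =>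
    intro a b hd hg
    simp only [GraphFormula.qdepth] at hd
    simp only [GraphFormula.Sat]
    rw [ihf a b (by omega) hg, ihg a b (by omega) hg]
  | all f ih =>
    intro a b hd hg
    simp only [GraphFormula.qdepth] at hd
    simp only [GraphFormula.Sat]
    constructor
    · intro h w
      obtain ⟨v, hg'⟩ := hback _ a b hg (by omega) w
      exact (ih _ _ (by omega) hg').1 (h v)
    · intro h v
      obtain ⟨w, hg'⟩ := hforth _ a b hg (by omega) v
      exact (ih _ _ (by omega) hg').2 (h w)
  | ex f ih =>
    intro a b hd hg
    simp only [GraphFormula.qdepth] at hd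
    simp only [GraphFormula.Sat]
    constructor
    · rintro ⟨v, hv⟩
      obtain ⟨w, hg'⟩ := hforth _ a b hg (by omega) v
      exact ⟨w, (ih _ _ (by omega) hg').1 hv⟩
    · rintro ⟨w, hw⟩
      obtain ⟨v, hg'⟩ := hback _ a b hg (by omega) w
      exact ⟨v, (ih _ _ (by omega) hg').2 hw⟩

/-- Satisfaction is invariant under graph isomorphisms. -/
theorem sat_iso {V₁ V₂ : Type*} {G₁ : SimpleGraph V₁} {G₂ : SimpleGraph V₂}
    (e : G₁ ≃g G₂) :
    ∀ {n : ℕ} (φ : GraphFormula n) (a : Fin n → V₁),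
      GraphFormula.Sat G₁ φ a ↔ GraphFormula.Sat G₂ φ (⇑e ∘ a) := by
  intro n φ
  induction φ with
  | eq i j =>
    intro a
    simp only [GraphFormula.Sat, Function.comp_apply]
    exact (EmbeddingLike.apply_eq_iff_eq e).symm
  | adj i j =>
    intro a
    simp only [GraphFormula.Sat, Function.comp_apply]
    exact (e.map_adj_iff).symm
  | not f ih =>
    intro a
    simp only [GraphFormula.Sat]
    rw [ih a]
  | and f g ihf ihg =>
    intro a
    simp only [GraphFormula.Sat]
    rw [ihf a, ihg a]
  | or f g ihf ihg =>
    intro a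
    simp only [GraphFormula.Sat]
    rw [ihf a, ihg a]
  | all f ih =>
    intro a
    simp only [GraphFormula.Sat]
    constructor
    · intro h w
      have := (ih (Fin.snoc a (e.symm w))).1 (h (e.symm w))
      rwa [Fin.comp_snoc, RelIso.apply_symm_apply] at this
    · intro h v
      have := h (e v)
      rw [← Fin.comp_snoc] at this
      exact (ih (Fin.snoc a v)).2 this
  | ex f ih =>
    intro a
    simp only [GraphFormula.Sat]
    constructor
    · rintro ⟨v, hv⟩
      refine ⟨e v, ?_⟩
      have := (ih (Fin.snoc a v)).1 hv
      rwa [Fin.comp_snoc] at this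
    · rintro ⟨w, hw⟩
      refine ⟨e.symm w, ?_⟩
      apply (ih (Fin.snoc a (e.symm w))).2
      rwa [Fin.comp_snoc, RelIso.apply_symm_apply]

theorem satSentence_iso {V₁ V₂ : Type*} {G₁ : SimpleGraph V₁} {G₂ : SimpleGraph V₂}
    (e : G₁ ≃g G₂) (φ : GraphFormula 0) : SatSentence G₁ φ ↔ SatSentence G₂ φ := by
  have h := sat_iso e φ Fin.elim0
  have h2 : (⇑e ∘ Fin.elim0 : Fin 0 → V₂) = Fin.elim0 := funext fun i => i.elim0
  rw [h2] at h
  exact h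

/-- One valid pruning step preserves FO sentences of quantifier depth at most `k`. -/
theorem prune_step_equiv {V : Type*} {G : SimpleGraph V} {T : ElimTree V}
    (hT2 : ∀ x y : V, G.Adj x y → T.IsAncestor x y ∨ T.IsAncestor y x)
    {k : ℕ} {S : Set V} (hanc : AncClosed T S) {u : V} {S' : Set V}
    (hstep : PruneStep G T k S u S') (φ : GraphFormula 0)
    (hφ : GraphFormula.qdepth φ ≤ k) :
    SatSentence (G.induce S) φ ↔ SatSentence (G.induce S') φ := by
  classical
  obtain ⟨huS, hur, ⟨C, hCS, huC, hCfin, hCcard, hCpar, hCtype⟩, hS'⟩ := hstep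
  choose! F hbij hfu hpar hda using hCtype
  set A : Set V := T.subtree S u with hA
  -- basic facts about the members of `C`
  have hwroot : ∀ w ∈ C, w ≠ T.root := by
    intro w hw hweq
    have := (hCpar w hw).2
    rw [hweq, ← (hCpar w hw).1, hweq, T.parent_root] at this
    exact this rfl
  have hdepthw : ∀ w ∈ C, T.depth w = T.depth u := by
    intro w hw
    have h1 := depth_parent T (hwroot w hw)
    have h2 := depth_parent T hur
    rw [(hCpar w hw).1, ← (hCpar u huC).1] at h1
    omega
  have hcompare : ∀ w₁ ∈ C, ∀ w₂ ∈ C, ∀ x : V,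
      T.IsAncestor w₁ x → T.IsAncestor w₂ x → w₁ = w₂ := by
    intro w₁ h1 w₂ h2 x ha1 ha2
    rcases ancestors_comparable T ha1 ha2 with h | h
    · exact (ancestor_eq_of_depth_eq T h (hwroot w₁ h1)
        (by rw [hdepthw w₁ h1, hdepthw w₂ h2]))
    · exact (ancestor_eq_of_depth_eq T h (hwroot w₂ h2)
        (by rw [hdepthw w₁ h1, hdepthw w₂ h2])).symm
  have hsubS' : ∀ w ∈ C, w ≠ u → T.subtree S w ⊆ S' := by
    intro w hw hwu x hx
    rw [hS']
    refine ⟨hx.1, ?_⟩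
    intro hux
    exact hwu (hcompare w hw u huC x hx.2 hux)
  have houtS' : ∀ x ∈ S, (∀ w ∈ C, ¬ T.IsAncestor w x) → x ∈ S' := by
    intro x hx h
    rw [hS']
    exact ⟨hx, fun hux => h u huC hux⟩
  have hS'S : S' ⊆ S := by rw [hS']; exact Set.diff_subset
  -- membership facts about the subtree `A`
  have hAS : A ⊆ S := fun x hx => hx.1
  have hiterA : ∀ x ∈ A, ∀ j, j ≤ T.depth x - T.depth u →
      T.parent^[j] x ∈ A ∧ T.depth (T.parent^[j] x) = T.depth x - j := by
    intro x hx j hj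
    obtain ⟨hdle, hcan, _⟩ := ancestor_canonical T hx.2 hur
    have hjx : j ≤ T.depth x := by omega
    have hdep := depth_iterate T hjx
    refine ⟨⟨hanc x hx.1 j, ?_⟩, hdep⟩
    refine ⟨T.depth x - T.depth u - j, ?_⟩
    rw [← Function.iterate_add_apply, Nat.sub_add_cancel hj]
    exact hcan
  have hne_u : ∀ x ∈ A, ∀ j, j < T.depth x - T.depth u → T.parent^[j] x ≠ u := by
    intro x hx j hj heq
    have := (hiterA x hx j (by omega)).2
    rw [heq] at this
    omega
  have hcanA : ∀ x ∈ A, T.parent^[T.depth x - T.depth u] x = u :=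
    fun x hx => (ancestor_canonical T hx.2 hur).2.1
  have hduA : ∀ x ∈ A, T.depth u ≤ T.depth x :=
    fun x hx => (ancestor_canonical T hx.2 hur).1
  -- commutation of `F w` with the parent map inside the subtree
  have hcomm : ∀ w ∈ C, ∀ x ∈ A, ∀ j, j ≤ T.depth x - T.depth u →
      F w (T.parent^[j] x) = T.parent^[j] (F w x) := by
    intro w hw x hx j
    induction j with
    | zero => intro _; rfl
    | succ j ih =>
      intro hj
      have hj' : j ≤ T.depth x - T.depth u := by omega
      have hyA := (hiterA x hx j hj').1
      have hynu := hne_u x hx j (by omega)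
      rw [Function.iterate_succ_apply', Function.iterate_succ_apply',
        hpar w hw _ hyA hynu, ih hj']
  have hFmem : ∀ w ∈ C, ∀ x ∈ A, F w x ∈ T.subtree S w :=
    fun w hw x hx => (hbij w hw).mapsTo hx
  have hFdepth : ∀ w ∈ C, ∀ x ∈ A, T.depth (F w x) = T.depth x :=
    fun w hw x hx => (hda w hw x hx).1
  have hFinj : ∀ w ∈ C, Set.InjOn (F w) A := fun w hw => (hbij w hw).injOn
  -- above the subtree, `F w x` and `x` have the same ancestors
  have hcommon : ∀ w ∈ C, ∀ x ∈ A, ∀ j, T.depth x - T.depth u < j →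
      T.parent^[j] (F w x) = T.parent^[j] x := by
    intro w hw x hx j hj
    set dl := T.depth x - T.depth u with hdl
    have h1 : T.parent^[dl] (F w x) = w := by
      rw [← hcomm w hw x hx dl le_rfl, hcanA x hx, hfu w hw]
    have h2 : T.parent^[dl] x = u := hcanA x hx
    have hstep1 : ∀ m : ℕ, 1 ≤ m → T.parent^[m] w = T.parent^[m] u := by
      intro m hm
      have : m = (m - 1) + 1 := by omega
      rw [this, Function.iterate_succ_apply, Function.iterate_succ_apply,
        (hCpar w hw).1, (hCpar u huC).1]
    have hj1 : j = (j - dl) + dl := by omega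
    rw [hj1, Function.iterate_add_apply, Function.iterate_add_apply, h1, h2]
    exact hstep1 _ (by omega)
  -- adjacency within the subtree is preserved
  have haux1 : ∀ w ∈ C, ∀ x ∈ A, ∀ y ∈ A, T.IsAncestor y x → G.Adj x y →
      G.Adj (F w x) (F w y) := by
    intro w hw x hx y hy hyx hadj
    have hyroot : y ≠ T.root := fun h => root_not_strict T (h ▸ hy.2) hur
    obtain ⟨hdle, hcan, _⟩ := ancestor_canonical T hyx hyroot
    set m := T.depth x - T.depth y with hmdef
    have hm : m ≤ T.depth x - T.depth u := by have := hduA y hy; omega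
    have hFy : F w y = T.parent^[m] (F w x) := by
      rw [← hcomm w hw x hx m hm, hcan]
    have hiff := (hda w hw x hx).2 m
    rw [hcan] at hiff
    rw [hFy]
    exact hiff.1 hadj
  have haux2 : ∀ w ∈ C, ∀ x ∈ A, ∀ y ∈ A, T.IsAncestor (F w y) (F w x) →
      G.Adj (F w x) (F w y) → G.Adj x y := by
    intro w hw x hx y hy hyx hadj
    have hFyroot : F w y ≠ T.root := fun h =>
      root_not_strict T (h ▸ (hFmem w hw y hy).2) (hwroot w hw)
    obtain ⟨hdle, hcan, _⟩ := ancestor_canonical T hyx hFyroot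
    have hm'eq : T.depth (F w x) - T.depth (F w y) = T.depth x - T.depth y := by
      rw [hFdepth w hw x hx, hFdepth w hw y hy]
    rw [hm'eq] at hcan
    set m := T.depth x - T.depth y with hmdef
    have hm : m ≤ T.depth x - T.depth u := by
      have h1 := hduA y hy
      have h2 := hdle
      rw [hFdepth w hw x hx, hFdepth w hw y hy] at h2
      omega
    have hyA := (hiterA x hx m hm).1
    have hfy : F w (T.parent^[m] x) = F w y := by
      rw [hcomm w hw x hx m hm, hcan]
    have hpy : T.parent^[m] x = y := hFinj w hw hyA hy hfy
    have hiff := (hda w hw x hx).2 m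
    rw [hpy, hcan] at hiff
    exact hiff.2 hadj
  have hwithin : ∀ w ∈ C, ∀ x ∈ A, ∀ y ∈ A, (G.Adj x y ↔ G.Adj (F w x) (F w y)) := by
    intro w hw x hx y hy
    constructor
    · intro h
      rcases hT2 x y h with hxy | hyx
      · exact (haux1 w hw y hy x hx hxy h.symm).symm
      · exact haux1 w hw x hx y hy hyx h
    · intro h
      rcases hT2 (F w x) (F w y) h with h1 | h2
      · exact (haux2 w hw y hy x hx h1 h.symm).symm
      · exact haux2 w hw x hx y hy h2 h
  -- adjacency to outside vertices is preserved
  have getm : ∀ o y : V, T.IsAncestor o y → T.parent^[T.depth y - T.depth o] y = o := by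
    intro o y hy
    by_cases hor : o = T.root
    · subst hor
      have h0 : T.depth T.root = 0 := (depth_eq_zero_iff T).2 rfl
      rw [h0, Nat.sub_zero]
      exact iterate_past T le_rfl
    · exact (ancestor_canonical T hy hor).2.1
  have hout : ∀ w ∈ C, ∀ z ∈ A, ∀ o ∈ S, ¬ T.IsAncestor w o → ¬ T.IsAncestor u o →
      (G.Adj o (F w z) ↔ G.Adj o z) := by
    intro w hw z hz o hoS hwo huo
    have hdx : T.depth (F w z) = T.depth z := hFdepth w hw z hz
    constructor
    · intro h
      rcases hT2 o (F w z) h with hox | hxo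
      · set m := T.depth z - T.depth o with hmdef
        have hm : T.parent^[m] (F w z) = o := by
          have := getm o (F w z) hox
          rwa [hdx] at this
        have hmgt : T.depth z - T.depth u < m := by
          by_contra hle
          push_neg at hle
          apply hwo
          rw [← hm, ← hcomm w hw z hz m hle]
          exact (hFmem w hw _ (hiterA z hz m hle).1).2
        have hmz : T.parent^[m] z = o := by
          rw [← hcommon w hw z hz m hmgt, hm]
        have hiff := (hda w hw z hz).2 m
        rw [hm, hmz] at hiff
        exact (hiff.2 h.symm).symm
      · exact absurd (isAncestor_trans T (hFmem w hw z hz).2 hxo) hwo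
    · intro h
      rcases hT2 o z h with hoz | hzo
      · set m := T.depth z - T.depth o with hmdef
        have hmz : T.parent^[m] z = o := getm o z hoz
        have hmgt : T.depth z - T.depth u < m := by
          by_contra hle
          push_neg at hle
          apply huo
          rw [← hmz]
          exact (hiterA z hz m hle).1.2
        have hm : T.parent^[m] (F w z) = o := by
          rw [hcommon w hw z hz m hmgt, hmz]
        have hiff := (hda w hw z hz).2 m
        rw [hm, hmz] at hiff
        exact (hiff.1 h.symm).symm
      · exact absurd (isAncestor_trans T hz.2 hzo) huo
  -- no adjacency across different sibling subtrees
  have hnotadj : ∀ w₁ ∈ C, ∀ w₂ ∈ C, w₁ ≠ w₂ → ∀ x y : V,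
      T.IsAncestor w₁ x → T.IsAncestor w₂ y → ¬ G.Adj x y := by
    intro w₁ h1 w₂ h2 hne x y ha1 ha2 hadj
    rcases hT2 x y hadj with h | h
    · exact hne (hcompare w₁ h1 w₂ h2 y (isAncestor_trans T ha1 h) ha2)
    · exact hne (hcompare w₁ h1 w₂ h2 x ha1 (isAncestor_trans T ha2 h))
  -- the back-and-forth invariant
  set Good : ∀ n : ℕ, (Fin n → ↥S) → (Fin n → ↥S') → Prop := fun n a b =>
    ∃ (W : Finset V) (σ : V → V),
      ↑W ⊆ C ∧ W.card ≤ n ∧ Set.InjOn σ ↑W ∧ (∀ w ∈ W, σ w ∈ C ∧ σ w ≠ u) ∧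
      ∀ i, ((a i : V) = (b i : V) ∧ ∀ w ∈ C, ¬ T.IsAncestor w (a i : V))
        ∨ (∃ w ∈ W, ∃ z ∈ A, (a i : V) = F w z ∧ (b i : V) = F (σ w) z) with hGood
  -- analysis of a pair of pebbles
  have hpair : ∀ (W : Finset V) (σ : V → V), ↑W ⊆ C → Set.InjOn σ ↑W →
      (∀ w ∈ W, σ w ∈ C ∧ σ w ≠ u) →
      ∀ (x₁ y₁ x₂ y₂ : V), x₁ ∈ S → x₂ ∈ S →
      ((x₁ = y₁ ∧ ∀ w ∈ C, ¬ T.IsAncestor w x₁) ∨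
        (∃ w ∈ W, ∃ z ∈ A, x₁ = F w z ∧ y₁ = F (σ w) z)) →
      ((x₂ = y₂ ∧ ∀ w ∈ C, ¬ T.IsAncestor w x₂) ∨
        (∃ w ∈ W, ∃ z ∈ A, x₂ = F w z ∧ y₂ = F (σ w) z)) →
      ((x₁ = x₂ ↔ y₁ = y₂) ∧ (G.Adj x₁ x₂ ↔ G.Adj y₁ y₂)) := by
    intro W σ hWC hinj hmaps x₁ y₁ x₂ y₂ hx₁S hx₂S hp₁ hp₂
    rcases hp₁ with ⟨heq1, hout1⟩ | ⟨w₁, hw₁, z₁, hz₁, hxz₁, hyz₁⟩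
    · rcases hp₂ with ⟨heq2, hout2⟩ | ⟨w₂, hw₂, z₂, hz₂, hxz₂, hyz₂⟩
      · exact ⟨by rw [heq1, heq2], by rw [heq1, heq2]⟩
      · have hw₂C : w₂ ∈ C := hWC hw₂
        have hσC : σ w₂ ∈ C := (hmaps w₂ hw₂).1
        have hne1 : x₁ ≠ x₂ := by
          intro h
          exact hout1 w₂ hw₂C (h ▸ hxz₂ ▸ (hFmem w₂ hw₂C z₂ hz₂).2)
        have hne2 : y₁ ≠ y₂ := by
          intro h
          exact hout1 (σ w₂) hσC (heq1 ▸ h ▸ hyz₂ ▸ (hFmem (σ w₂) hσC z₂ hz₂).2)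
        refine ⟨iff_of_false hne1 hne2, ?_⟩
        rw [hxz₂, hyz₂, ← heq1]
        rw [hout w₂ hw₂C z₂ hz₂ x₁ hx₁S (hout1 w₂ hw₂C) (hout1 u huC),
          hout (σ w₂) hσC z₂ hz₂ x₁ hx₁S (hout1 (σ w₂) hσC) (hout1 u huC)]
    · rcases hp₂ with ⟨heq2, hout2⟩ | ⟨w₂, hw₂, z₂, hz₂, hxz₂, hyz₂⟩
      · have hw₁C : w₁ ∈ C := hWC hw₁
        have hσC : σ w₁ ∈ C := (hmaps w₁ hw₁).1
        have hne1 : x₁ ≠ x₂ := by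
          intro h
          exact hout2 w₁ hw₁C (h ▸ hxz₁ ▸ (hFmem w₁ hw₁C z₁ hz₁).2)
        have hne2 : y₁ ≠ y₂ := by
          intro h
          exact hout2 (σ w₁) hσC (heq2 ▸ h.symm ▸ hyz₁ ▸ (hFmem (σ w₁) hσC z₁ hz₁).2)
        refine ⟨iff_of_false hne1 hne2, ?_⟩
        rw [hxz₁, hyz₁, ← heq2]
        rw [G.adj_comm, G.adj_comm (F (σ w₁) z₁)]
        rw [hout w₁ hw₁C z₁ hz₁ x₂ hx₂S (hout2 w₁ hw₁C) (hout2 u huC),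
          hout (σ w₁) hσC z₁ hz₁ x₂ hx₂S (hout2 (σ w₁) hσC) (hout2 u huC)]
      · have hw₁C : w₁ ∈ C := hWC hw₁
        have hw₂C : w₂ ∈ C := hWC hw₂
        have hσ₁C : σ w₁ ∈ C := (hmaps w₁ hw₁).1
        have hσ₂C : σ w₂ ∈ C := (hmaps w₂ hw₂).1
        by_cases hww : w₁ = w₂
        · subst hww
          constructor
          · rw [hxz₁, hxz₂, hyz₁, hyz₂]
            rw [(hFinj w₁ hw₁C).eq_iff hz₁ hz₂, (hFinj (σ w₁) hσ₁C).eq_iff hz₁ hz₂]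
          · rw [hxz₁, hxz₂, hyz₁, hyz₂]
            rw [← hwithin w₁ hw₁C z₁ hz₁ z₂ hz₂, hwithin (σ w₁) hσ₁C z₁ hz₁ z₂ hz₂]
        · have hσne : σ w₁ ≠ σ w₂ := fun h => hww (hinj hw₁ hw₂ h)
          have ha₁ := hxz₁ ▸ (hFmem w₁ hw₁C z₁ hz₁).2
          have ha₂ := hxz₂ ▸ (hFmem w₂ hw₂C z₂ hz₂).2
          have hb₁ := hyz₁ ▸ (hFmem (σ w₁) hσ₁C z₁ hz₁).2
          have hb₂ := hyz₂ ▸ (hFmem (σ w₂) hσ₂C z₂ hz₂).2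
          constructor
          · refine iff_of_false (fun h => hww ?_) (fun h => hσne ?_)
            · exact hcompare w₁ hw₁C w₂ hw₂C x₂ (h ▸ ha₁) ha₂
            · exact hcompare (σ w₁) hσ₁C (σ w₂) hσ₂C y₂ (h ▸ hb₁) hb₂
          · exact iff_of_false (hnotadj w₁ hw₁C w₂ hw₂C hww x₁ x₂ ha₁ ha₂)
              (hnotadj (σ w₁) hσ₁C (σ w₂) hσ₂C hσne y₁ y₂ hb₁ hb₂)
  have main := ef_lemma (G.induce S) (G.induce S') k Good ?_ ?_ ?_ ?_
    φ Fin.elim0 Fin.elim0 (by simpa using hφ) ?_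
  · exact main
  -- equality atoms
  · rintro n a b ⟨W, σ, hWC, _, hinj, hmaps, hpeb⟩ i j
    have := (hpair W σ hWC hinj hmaps (a i) (b i) (a j) (b j)
      (a i).2 (a j).2 (hpeb i) (hpeb j)).1
    rw [Subtype.ext_iff, Subtype.ext_iff]
    exact this
  -- adjacency atoms
  · rintro n a b ⟨W, σ, hWC, _, hinj, hmaps, hpeb⟩ i j
    have := (hpair W σ hWC hinj hmaps (a i) (b i) (a j) (b j)
      (a i).2 (a j).2 (hpeb i) (hpeb j)).2
    simpa using this
  -- forth
  · rintro n a b ⟨W, σ, hWC, hWcard, hinj, hmaps, hpeb⟩ hn v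
    by_cases hc : ∃ w ∈ C, T.IsAncestor w (v : V)
    · obtain ⟨w₀, hw₀C, hw₀v⟩ := hc
      have hvsub : (v : V) ∈ T.subtree S w₀ := ⟨v.2, hw₀v⟩
      obtain ⟨z, hz, hfz⟩ := (hbij w₀ hw₀C).surjOn hvsub
      by_cases hw₀W : w₀ ∈ W
      · have hσC := (hmaps w₀ hw₀W).1
        have hσu := (hmaps w₀ hw₀W).2
        refine ⟨⟨F (σ w₀) z, hsubS' (σ w₀) hσC hσu (hFmem (σ w₀) hσC z hz)⟩,
          W, σ, hWC, by omega, hinj, hmaps, ?_⟩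
        intro i
        refine Fin.lastCases ?_ (fun i => by simpa [Fin.snoc_castSucc] using hpeb i) i
        right
        exact ⟨w₀, hw₀W, z, hz, by simp [Fin.snoc_last, ← hfz], by simp [Fin.snoc_last]⟩
      · -- extend `σ` on a new sibling, with a fresh image `t`
        have hcards : (hCfin.toFinset \ insert u (W.image σ)).Nonempty := by
          rw [← Finset.card_pos]
          have h1 : (insert u (W.image σ)).card ≤ n + 1 := by
            calc (insert u (W.image σ)).card ≤ (W.image σ).card + 1 :=
                  Finset.card_insert_le _ _
            _ ≤ W.card + 1 := by have := Finset.card_image_le (s := W) (f := σ); omega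
            _ ≤ n + 1 := by omega
          have h2 : k + 1 ≤ hCfin.toFinset.card := by
            rwa [Set.ncard_eq_toFinset_card C hCfin] at hCcard
          have h3 := Finset.le_card_sdiff (insert u (W.image σ)) hCfin.toFinset
          omega
        obtain ⟨t, ht⟩ := hcards
        rw [Finset.mem_sdiff, Set.Finite.mem_toFinset, Finset.mem_insert] at ht
        push_neg at ht
        obtain ⟨htC, htu, htim⟩ := ht
        have htim' : ∀ w ∈ W, σ w ≠ t := by
          intro w hw h
          exact htim (Finset.mem_image.2 ⟨w, hw, h⟩)
        have hneW : ∀ w : V, w ∈ (W : Set V) → w ≠ w₀ := by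
          intro w hw hh
          subst hh
          exact hw₀W hw
        refine ⟨⟨F t z, hsubS' t htC htu (hFmem t htC z hz)⟩,
          insert w₀ W, Function.update σ w₀ t, ?_, ?_, ?_, ?_, ?_⟩
        · rw [Finset.coe_insert]
          exact Set.insert_subset hw₀C hWC
        · have := Finset.card_insert_le w₀ W
          omega
        · intro x hx y hy h
          rw [Finset.coe_insert, Set.mem_insert_iff] at hx hy
          rcases hx with rfl | hxW <;> rcases hy with rfl | hyW
          · rfl
          · rw [Function.update_self, Function.update_of_ne (hneW y hyW)] at h
            exact absurd h.symm (htim' y hyW)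
          · rw [Function.update_self, Function.update_of_ne (hneW x hxW)] at h
            exact absurd h (htim' x hxW)
          · rw [Function.update_of_ne (hneW x hxW),
              Function.update_of_ne (hneW y hyW)] at h
            exact hinj hxW hyW h
        · intro w hw
          rcases Finset.mem_insert.1 hw with rfl | hwW
          · rw [Function.update_self]
            exact ⟨htC, htu⟩
          · rw [Function.update_of_ne (hneW w hwW)]
            exact hmaps w hwW
        · intro i
          refine Fin.lastCases ?_ ?_ i
          · right
            refine ⟨w₀, Finset.mem_insert_self _ _, z, hz, by simp [Fin.snoc_last, ← hfz], ?_⟩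
            simp [Fin.snoc_last, Function.update_self]
          · intro i
            have := hpeb i
            rcases this with h | ⟨w, hwW, z', hz', he1, he2⟩
            · left
              simpa [Fin.snoc_castSucc] using h
            · right
              refine ⟨w, Finset.mem_insert_of_mem hwW, z', hz', ?_, ?_⟩
              · simpa [Fin.snoc_castSucc] using he1
              · rw [Function.update_of_ne (hneW w hwW)]
                simpa [Fin.snoc_castSucc] using he2
    · push_neg at hc
      refine ⟨⟨(v : V), houtS' (v : V) v.2 hc⟩, W, σ, hWC, by omega, hinj, hmaps, ?_⟩
      intro i
      refine Fin.lastCases ?_ (fun i => by simpa [Fin.snoc_castSucc] using hpeb i) i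
      left
      exact ⟨by simp [Fin.snoc_last], by simpa [Fin.snoc_last] using hc⟩
  -- back
  · rintro n a b ⟨W, σ, hWC, hWcard, hinj, hmaps, hpeb⟩ hn y
    by_cases hc : ∃ w ∈ C, T.IsAncestor w (y : V)
    · obtain ⟨w₁, hw₁C, hw₁y⟩ := hc
      have hynotD : ¬ T.IsAncestor u (y : V) := by
        have h2 : (y : V) ∈ S \ {x | T.IsAncestor u x} := by rw [← hS']; exact y.2
        exact h2.2
      have hysub : (y : V) ∈ T.subtree S w₁ := ⟨hS'S y.2, hw₁y⟩
      obtain ⟨z, hz, hfz⟩ := (hbij w₁ hw₁C).surjOn hysub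
      by_cases h1 : ∃ w ∈ W, σ w = w₁
      · obtain ⟨w, hwW, hσw⟩ := h1
        refine ⟨⟨F w z, (hFmem w (hWC hwW) z hz).1⟩,
          W, σ, hWC, by omega, hinj, hmaps, ?_⟩
        intro i
        refine Fin.lastCases ?_ (fun i => by simpa [Fin.snoc_castSucc] using hpeb i) i
        right
        exact ⟨w, hwW, z, hz, by simp [Fin.snoc_last], by simp [Fin.snoc_last, hσw, ← hfz]⟩
      · -- extend `σ` with a fresh sibling mapping to `w₁`
        have hw₁u : w₁ ≠ u := fun h => hynotD (h ▸ hw₁y)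
        have hcards : (hCfin.toFinset \ W).Nonempty := by
          rw [← Finset.card_pos]
          have h2 : k + 1 ≤ hCfin.toFinset.card := by
            rwa [Set.ncard_eq_toFinset_card C hCfin] at hCcard
          have h3 := Finset.le_card_sdiff W hCfin.toFinset
          omega
        obtain ⟨t, ht⟩ := hcards
        rw [Finset.mem_sdiff, Set.Finite.mem_toFinset] at ht
        obtain ⟨htC, htW⟩ := ht
        have hσim : ∀ w ∈ W, σ w ≠ w₁ := fun w hw h => h1 ⟨w, hw, h⟩
        have hneW : ∀ w : V, w ∈ (W : Set V) → w ≠ t := by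
          intro w hw hh
          subst hh
          exact htW hw
        refine ⟨⟨F t z, (hFmem t htC z hz).1⟩,
          insert t W, Function.update σ t w₁, ?_, ?_, ?_, ?_, ?_⟩
        · rw [Finset.coe_insert]
          exact Set.insert_subset htC hWC
        · have := Finset.card_insert_le t W
          omega
        · intro x hx y' hy'
          rw [Finset.coe_insert, Set.mem_insert_iff] at hx hy'
          intro h
          rcases hx with rfl | hxW <;> rcases hy' with rfl | hy'W
          · rfl
          · rw [Function.update_self, Function.update_of_ne (hneW y' hy'W)] at h
            exact absurd h.symm (hσim y' hy'W)
          · rw [Function.update_self, Function.update_of_ne (hneW x hxW)] at h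
            exact absurd h (hσim x hxW)
          · rw [Function.update_of_ne (hneW x hxW),
              Function.update_of_ne (hneW y' hy'W)] at h
            exact hinj hxW hy'W h
        · intro w hw
          rcases Finset.mem_insert.1 hw with rfl | hwW
          · rw [Function.update_self]
            exact ⟨hw₁C, hw₁u⟩
          · rw [Function.update_of_ne (hneW w hwW)]
            exact hmaps w hwW
        · intro i
          refine Fin.lastCases ?_ ?_ i
          · right
            refine ⟨t, Finset.mem_insert_self _ _, z, hz, by simp [Fin.snoc_last], ?_⟩
            simp [Fin.snoc_last, Function.update_self, ← hfz]
          · intro i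
            rcases hpeb i with h | ⟨w, hwW, z', hz', he1, he2⟩
            · left
              simpa [Fin.snoc_castSucc] using h
            · right
              refine ⟨w, Finset.mem_insert_of_mem hwW, z', hz', ?_, ?_⟩
              · simpa [Fin.snoc_castSucc] using he1
              · rw [Function.update_of_ne (hneW w hwW)]
                simpa [Fin.snoc_castSucc] using he2
    · push_neg at hc
      refine ⟨⟨(y : V), hS'S y.2⟩, W, σ, hWC, by omega, hinj, hmaps, ?_⟩
      intro i
      refine Fin.lastCases ?_ (fun i => by simpa [Fin.snoc_castSucc] using hpeb i) i
      left
      exact ⟨by simp [Fin.snoc_last], by simpa [Fin.snoc_last] using hc⟩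
  -- initial position
  · exact ⟨∅, id, by simp, by simp, by simp, by simp, fun i => i.elim0⟩

end KRAux

/-- Let `G` be a connected graph with a `t`-model `T`, let `k` be an
integer, and let `H` be a `k`-reduced graph of `G` obtained via valid prunings from `T`.
Then `G ≃_k H`: `G` and `H` satisfy the same FO sentences of quantifier depth at
most `k`. -/
theorem kreduced_elementarily_equivalent {V : Type} [Fintype V] (G : SimpleGraph V)
    (hG : G.Connected) (t k : ℕ) (T : ElimTree V) (hT : IsModelOfDepth T G t)
    (P : PruningProcess G T k)
    (φ : GraphFormula 0) (hφ : GraphFormula.qdepth φ ≤ k) :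
    SatSentence G φ ↔ SatSentence (G.induce P.result) φ := by
  classical
  have hanc : ∀ i, i ≤ P.len → KRAux.AncClosed T (P.sets i) := by
    intro i
    induction i with
    | zero =>
      intro _ x hx j
      rw [P.init]
      trivial
    | succ i ih =>
      intro hi
      obtain ⟨-, -, -, hS'⟩ := (P.step i (by omega)).1
      intro x hx j
      rw [hS'] at hx ⊢
      refine ⟨ih (by omega) x hx.1 j, ?_⟩
      intro hu
      exact hx.2 (KRAux.isAncestor_trans T hu ⟨j, rfl⟩)
  have hchain : ∀ i, i ≤ P.len →
      (SatSentence (G.induce (P.sets 0)) φ ↔ SatSentence (G.induce (P.sets i)) φ) := by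
    intro i
    induction i with
    | zero => intro _; exact Iff.rfl
    | succ i ih =>
      intro hi
      refine (ih (by omega)).trans ?_
      exact KRAux.prune_step_equiv hT.2 (hanc i (by omega)) (P.step i (by omega)).1 φ hφ
  have h0 : SatSentence G φ ↔ SatSentence (G.induce (P.sets 0)) φ := by
    rw [P.init]
    exact (KRAux.satSentence_iso (SimpleGraph.induceUnivIso G) φ).symm
  exact h0.trans (hchain P.len le_rfl)
end

section
/- Let G be a graph with a t-model T, let k be an integer, and let H be a k-reduced graph of G obtained via valid prunings from T. Let u be a vertex deleted from G (u ∉ V(H)) and v ∈ V(H) its parent in T. Then exactly k children of v in T that belong to H have end type equal to the end type of u. -/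
/-! Let `i` be the step at which `u` is pruned. A pruning that is valid after a step and deeper
than the vertex pruned at that step was already valid before it, so by the maximal-depth rule the
depths of the pruned vertices never increase: from step `i` on they are at most the depth of `u`,
and such a pruning removes no other child of `v` and changes no subtree of one. Hence the children of `v`
whose type is the end type of `u` lose one member at a time, and only while they are more than
`k`, so at least `k` of them survive; since no pruning applies at the end, at most `k` do. -/

lemma Set.le_encard_of_sdiff_singleton_subset {α : Type*} {A B : Set α} {a : α} {k : ℕ∞}
    (hsub : A \ {a} ⊆ B) (hA : a ∈ A → k + 1 ≤ A.encard) (hk : k ≤ A.encard) : k ≤ B.encard := by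
  by_cases ha : a ∈ A
  · have h := Set.encard_sdiff_singleton_add_one ha ▸ hA ha
    exact (WithTop.add_le_add_iff_right ENat.one_ne_top).mp h |>.trans (Set.encard_le_encard hsub)
  · rw [Set.sdiff_singleton_eq_self ha] at hsub
    exact hk.trans (Set.encard_le_encard hsub)

lemma Set.le_encard_of_forall_sdiff_singleton_subset {α : Type*} {A : ℕ → Set α} {p : ℕ → α}
    {k : ℕ∞} {i n : ℕ} (hin : i < n) (hpi : p i ∈ A i)
    (hsub : ∀ j, i ≤ j → j < n → A j \ {p j} ⊆ A (j + 1))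
    (hcard : ∀ j, i ≤ j → j < n → p j ∈ A j → k + 1 ≤ (A j).encard) : k ≤ (A n).encard := by
  induction n, Nat.succ_le_of_lt hin using Nat.le_induction with
  | base =>
    have hki := hcard i le_rfl (Nat.lt_succ_self i) hpi
    exact Set.le_encard_of_sdiff_singleton_subset (hsub i le_rfl (Nat.lt_succ_self i))
      (fun _ => hki) (le_self_add.trans hki)
  | succ n hn ih =>
    exact Set.le_encard_of_sdiff_singleton_subset (hsub n (by omega) (Nat.lt_succ_self n))
      (hcard n (by omega) (Nat.lt_succ_self n)) (ih hn (fun j hij hj => hsub j hij (by omega))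
        (fun j hij hj => hcard j hij (by omega)))

namespace ElimTree

variable {V : Type*} {T : ElimTree V} {S : Set V} {p u v w x y : V}

def IsParentClosed (T : ElimTree V) (S : Set V) : Prop := ∀ x ∈ S, T.parent x ∈ S

lemma iterate_parent_depth (T : ElimTree V) (v : V) : T.parent^[T.depth v] v = T.root :=
  Nat.sInf_mem (T.reaches_root v)

lemma depth_root (T : ElimTree V) : T.depth T.root = 0 :=
  Nat.eq_zero_of_le_zero (Nat.sInf_le rfl)

lemma eq_root_of_depth_eq_zero (h : T.depth v = 0) : v = T.root := by
  simpa [h] using T.iterate_parent_depth v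

lemma ne_root_of_parent_ne (h : T.parent v ≠ v) : v ≠ T.root := by
  rintro rfl
  exact h T.parent_root

lemma depth_parent (T : ElimTree V) (x : V) : T.depth (T.parent x) = T.depth x - 1 := by
  have hle : T.depth x ≤ T.depth (T.parent x) + 1 :=
    Nat.sInf_le (show T.parent^[_ + 1] x = _ by
      rw [Function.iterate_succ_apply]; exact T.iterate_parent_depth _)
  rcases Nat.eq_zero_or_pos (T.depth x) with h | h
  · rw [eq_root_of_depth_eq_zero h, T.parent_root, depth_root]
  · have hge : T.depth (T.parent x) ≤ T.depth x - 1 := Nat.sInf_le (show T.parent^[_] _ = _ by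
      rw [← Function.iterate_succ_apply, Nat.succ_eq_add_one, Nat.sub_add_cancel h]
      exact T.iterate_parent_depth x)
    omega

lemma depth_iterate_parent (T : ElimTree V) (x : V) (n : ℕ) :
    T.depth (T.parent^[n] x) = T.depth x - n := by
  induction n with
  | zero => rfl
  | succ n ih => rw [Function.iterate_succ_apply', depth_parent, ih, Nat.sub_sub]

lemma depth_lt_of_isAncestor (h : T.IsAncestor p y) (hne : p ≠ y) : T.depth p < T.depth y := by
  obtain ⟨n, rfl⟩ := h
  have hn : n ≠ 0 := by
    rintro rfl
    exact hne rfl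
  have hy : T.depth y ≠ 0 := fun h₀ => by
    rw [eq_root_of_depth_eq_zero h₀, Function.iterate_fixed T.parent_root] at hne
    exact hne rfl
  rw [depth_iterate_parent]
  omega

lemma depth_of_parent_eq (h : T.parent w = v) (hne : w ≠ v) : T.depth w = T.depth v + 1 := by
  have hlt := depth_lt_of_isAncestor ⟨1, h⟩ hne.symm
  have := T.depth_parent w
  rw [h] at this
  omega

lemma isAncestor_parent_of_ne (h : T.IsAncestor p u) (hne : p ≠ u) :
    T.IsAncestor p (T.parent u) := by
  obtain ⟨n, rfl⟩ := h
  obtain ⟨m, rfl⟩ := Nat.exists_eq_succ_of_ne_zero (fun h : n = 0 => hne (by rw [h]; rfl))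
  exact ⟨m, (Function.iterate_succ_apply _ _ _).symm⟩

lemma isAncestor_total_of_isAncestor (hx : T.IsAncestor x y) (hp : T.IsAncestor p y) :
    T.IsAncestor x p ∨ T.IsAncestor p x := by
  obtain ⟨a, rfl⟩ := hx
  obtain ⟨b, rfl⟩ := hp
  rcases le_total a b with h | h
  · exact Or.inr ⟨b - a, by rw [← Function.iterate_add_apply, Nat.sub_add_cancel h]⟩
  · exact Or.inl ⟨a - b, by rw [← Function.iterate_add_apply, Nat.sub_add_cancel h]⟩

lemma IsParentClosed.sdiff (hS : T.IsParentClosed S) (p : V) :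
    T.IsParentClosed (S \ {x | T.IsAncestor p x}) := by
  rintro x ⟨hxS, hpx⟩
  refine ⟨hS x hxS, fun ⟨n, hn⟩ => hpx ⟨n + 1, ?_⟩⟩
  rwa [Function.iterate_succ_apply]

lemma parent_mem_subtree (hS : T.IsParentClosed S) (hx : x ∈ T.subtree S v) (hne : x ≠ v) :
    T.parent x ∈ T.subtree S v :=
  ⟨hS x hx.1, isAncestor_parent_of_ne hx.2 hne.symm⟩

lemma subtree_sdiff_of_depth_le (hpw : ¬ T.IsAncestor p w) (hd : T.depth p ≤ T.depth w) :
    T.subtree (S \ {x | T.IsAncestor p x}) w = T.subtree S w := by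
  have hwp : ¬ T.IsAncestor w p := fun h => by
    have := depth_lt_of_isAncestor h (fun hwp => hpw (hwp ▸ ⟨0, rfl⟩))
    omega
  ext y
  refine ⟨fun ⟨⟨hyS, _⟩, hwy⟩ => ⟨hyS, hwy⟩, fun ⟨hyS, hwy⟩ => ⟨⟨hyS, fun hpy => ?_⟩, hwy⟩⟩
  exact (isAncestor_total_of_isAncestor hwy hpy).elim hwp hpw

end ElimTree

section SameTypeIn

open ElimTree

variable {V : Type*} {G : SimpleGraph V} {T : ElimTree V} {S₁ S₂ S₃ S₁' S₂' : Set V} {v w x : V}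

lemma sameTypeIn_congr (h₁ : T.subtree S₁ v = T.subtree S₁' v)
    (h₂ : T.subtree S₂ w = T.subtree S₂' w) :
    SameTypeIn G T S₁ S₂ v w ↔ SameTypeIn G T S₁' S₂' v w := by
  unfold SameTypeIn
  rw [h₁, h₂]

lemma sameTypeIn_refl (S : Set V) (v : V) : SameTypeIn G T S S v v :=
  ⟨id, Set.bijOn_id _, rfl, fun _ _ _ => rfl, fun _ _ => ⟨rfl, fun _ => Iff.rfl⟩⟩

lemma SameTypeIn.symm (hv : v ∈ S₁) (hS₁ : T.IsParentClosed S₁)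
    (h : SameTypeIn G T S₁ S₂ v w) : SameTypeIn G T S₂ S₁ w v := by
  have : Nonempty V := ⟨v⟩
  obtain ⟨f, hbij, hfv, hpar, hdepth⟩ := h
  set g := Function.invFunOn f (T.subtree S₁ v)
  have hinv : Set.InvOn g f (T.subtree S₁ v) (T.subtree S₂ w) := hbij.invOn_invFunOn
  have hbij' : Set.BijOn g (T.subtree S₂ w) (T.subtree S₁ v) := hbij.symm hinv.symm
  refine ⟨g, hbij', by rw [← hfv]; exact hinv.1 ⟨hv, 0, rfl⟩, fun y hy hyw => ?_, fun y hy => ?_⟩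
  · have hgy := hbij'.mapsTo hy
    have hgyv : g y ≠ v := fun h => hyw (by rw [← hinv.2 hy, h, hfv])
    rw [← hinv.1 (parent_mem_subtree hS₁ hgy hgyv), hpar _ hgy hgyv, hinv.2 hy]
  · obtain ⟨hd, hadj⟩ := hdepth _ (hbij'.mapsTo hy)
    rw [hinv.2 hy] at hd hadj
    exact ⟨hd.symm, fun m => (hadj m).symm⟩

lemma SameTypeIn.trans (hv : v ∈ S₁) (h₁ : SameTypeIn G T S₁ S₂ v w)
    (h₂ : SameTypeIn G T S₂ S₃ w x) : SameTypeIn G T S₁ S₃ v x := by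
  obtain ⟨f₁, hbij₁, hf₁, hpar₁, hdepth₁⟩ := h₁
  obtain ⟨f₂, hbij₂, hf₂, hpar₂, hdepth₂⟩ := h₂
  refine ⟨f₂ ∘ f₁, hbij₂.comp hbij₁, by simp [hf₁, hf₂], fun y hy hyv => ?_, fun y hy => ?_⟩
  · have hne : f₁ y ≠ w := fun h => hyv (hbij₁.injOn hy ⟨hv, 0, rfl⟩ (h.trans hf₁.symm))
    simp only [Function.comp_apply]
    rw [hpar₁ y hy hyv, hpar₂ _ (hbij₁.mapsTo hy) hne]
  · obtain ⟨hd₁, hadj₁⟩ := hdepth₁ y hy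
    obtain ⟨hd₂, hadj₂⟩ := hdepth₂ _ (hbij₁.mapsTo hy)
    exact ⟨hd₂.trans hd₁, fun m => (hadj₁ m).trans (hadj₂ m)⟩

end SameTypeIn

section Pruning

open ElimTree

variable {V : Type*} {G : SimpleGraph V} {T : ElimTree V} {k : ℕ} {S S₀ S' : Set V} {p q u v : V}

/-- A pruning that becomes valid after removing the subtree of `p` only involves subtrees
strictly deeper than `p`, which that removal does not touch; so it was valid before. -/
lemma PruneStep.of_sdiff (h : PruneStep G T k (S \ {x | T.IsAncestor p x}) q S')
    (hd : T.depth p < T.depth q) : PruneStep G T k S q (S \ {x | T.IsAncestor q x}) := by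
  obtain ⟨hqS, hq, ⟨C, hCS, hqC, hCfin, hCcard, hCpar, hCtype⟩, -⟩ := h
  have hsub : ∀ w ∈ C, T.subtree (S \ {x | T.IsAncestor p x}) w = T.subtree S w := by
    intro w hw
    refine subtree_sdiff_of_depth_le (hCS hw).2 ?_
    have hwq : T.depth w = T.depth q := by
      rw [depth_of_parent_eq (hCpar w hw).1 (hCpar w hw).2,
        depth_of_parent_eq rfl (hCpar q hqC).2]
    omega
  refine ⟨hqS.1, hq, ⟨C, fun w hw => (hCS hw).1, hqC, hCfin, hCcard, hCpar, fun w hw => ?_⟩, rfl⟩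
  exact (sameTypeIn_congr (hsub q hqC) (hsub w hw)).mp (hCtype w hw)

variable (G T) in
def childrenOfType (S : Set V) (v : V) (S₀ : Set V) (u : V) : Set V :=
  {w | T.parent w = v ∧ w ≠ v ∧ w ∈ S ∧ SameTypeIn G T S S₀ w u}

lemma childrenOfType_sdiff_subset (hpv : ¬ T.IsAncestor p v) (hd : T.depth p ≤ T.depth v + 1) :
    childrenOfType G T S v S₀ u \ {p} ⊆
      childrenOfType G T (S \ {x | T.IsAncestor p x}) v S₀ u := by
  rintro w ⟨⟨hwv, hne, hwS, htype⟩, hwp⟩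
  have hpw : ¬ T.IsAncestor p w := fun h => hpv (hwv ▸ isAncestor_parent_of_ne h (Ne.symm hwp))
  have hsub : T.subtree (S \ {x | T.IsAncestor p x}) w = T.subtree S w :=
    subtree_sdiff_of_depth_le hpw (by rw [depth_of_parent_eq hwv hne]; exact hd)
  exact ⟨hwv, hne, ⟨hwS, hpw⟩, (sameTypeIn_congr hsub rfl).mpr htype⟩

lemma add_one_le_encard_childrenOfType (h : PruneStep G T k S p S') (hS : T.IsParentClosed S)
    (hp : p ∈ childrenOfType G T S v S₀ u) : k + 1 ≤ (childrenOfType G T S v S₀ u).encard := by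
  obtain ⟨hpv, hpne, hpS, hptype⟩ := hp
  obtain ⟨-, -, ⟨C, hCS, -, hCfin, hCcard, hCpar, hCtype⟩, -⟩ := h
  have hC : C ⊆ childrenOfType G T S v S₀ u := fun w hw =>
    ⟨(hCpar w hw).1.trans hpv, hpv ▸ (hCpar w hw).2, hCS hw,
      ((hCtype w hw).symm hpS hS).trans (hCS hw) hptype⟩
  calc (k + 1 : ℕ∞) ≤ C.ncard := by exact_mod_cast hCcard
    _ = C.encard := hCfin.cast_ncard_eq
    _ ≤ _ := Set.encard_le_encard hC

lemma encard_childrenOfType_le_of_forall_not_pruneStep (h : ∀ q S', ¬ PruneStep G T k S q S')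
    (hS : T.IsParentClosed S) : (childrenOfType G T S v S₀ u).encard ≤ k := by
  by_contra! hlt
  obtain ⟨C, hCA, hCcard⟩ := Set.exists_subset_encard_eq (Order.add_one_le_of_lt hlt)
  have hCfin : C.Finite := Set.finite_of_encard_eq_coe hCcard
  obtain ⟨w₀, hw₀⟩ : C.Nonempty := Set.nonempty_of_encard_ne_zero (by simp [hCcard])
  obtain ⟨hw₀v, hw₀ne, hw₀S, hw₀type⟩ := hCA hw₀
  refine h w₀ _ ⟨hw₀S, ne_root_of_parent_ne (hw₀v ▸ hw₀ne.symm), ⟨C, fun w hw => (hCA hw).2.2.1,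
    hw₀, hCfin, ?_, fun w hw => ?_, fun w hw => ?_⟩, rfl⟩
  · rw [← Nat.cast_le (α := ℕ∞), hCfin.cast_ncard_eq, hCcard]; rfl
  · exact ⟨(hCA hw).1.trans hw₀v.symm, hw₀v ▸ (hCA hw).2.1⟩
  · exact hw₀type.trans hw₀S ((hCA hw).2.2.2.symm (hCA hw).2.2.1 hS)

end Pruning

namespace PruningProcess

open ElimTree

variable {V : Type*} {G : SimpleGraph V} {T : ElimTree V} {k : ℕ} (P : PruningProcess G T k)
  {i j : ℕ} {u : V}

lemma sets_succ (hj : j < P.len) :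
    P.sets (j + 1) = P.sets j \ {x | T.IsAncestor (P.prunedAt j) x} :=
  (P.step j hj).1.2.2.2

lemma sets_antitone (hij : i ≤ j) (hj : j ≤ P.len) : P.sets j ⊆ P.sets i := by
  induction j, hij using Nat.le_induction with
  | base => exact subset_rfl
  | succ j _ ih => exact (P.sets_succ hj).subset.trans (Set.sdiff_subset.trans (ih (by omega)))

lemma isParentClosed_sets (hj : j ≤ P.len) : T.IsParentClosed (P.sets j) := by
  induction j with
  | zero => rw [P.init]; exact fun _ _ => Set.mem_univ _
  | succ j ih => rw [P.sets_succ hj]; exact (ih (by omega)).sdiff _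

lemma depth_le_of_pruneStep (hj : j < P.len) {q : V} {S' : Set V}
    (hq : PruneStep G T k (P.sets (j + 1)) q S') : T.depth q ≤ T.depth (P.prunedAt j) := by
  by_contra! hlt
  rw [P.sets_succ hj] at hq
  exact absurd ((P.step j hj).2 q _ (hq.of_sdiff hlt)) hlt.not_ge

lemma depth_prunedAt_antitone (hij : i ≤ j) (hj : j < P.len) :
    T.depth (P.prunedAt j) ≤ T.depth (P.prunedAt i) := by
  induction j, hij using Nat.le_induction with
  | base => exact le_rfl
  | succ j _ ih =>
    exact (P.depth_le_of_pruneStep (by omega) (P.step (j + 1) hj).1).trans (ih (by omega))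

lemma mem_sets_of_le_lastIdx (hi : i ≤ P.lastIdx u) : u ∈ P.sets i := by
  induction i with
  | zero => rw [P.init]; exact Set.mem_univ u
  | succ i ih =>
    by_contra h
    have : P.lastIdx u ≤ i := Nat.sInf_le (Or.inr h)
    omega

lemma lastIdx_spec (u : V) : P.lastIdx u = P.len ∨ u ∉ P.sets (P.lastIdx u + 1) :=
  Nat.sInf_mem (s := {i | i = P.len ∨ u ∉ P.sets (i + 1)}) ⟨P.len, Or.inl rfl⟩

lemma lastIdx_le_len (u : V) : P.lastIdx u ≤ P.len :=
  Nat.sInf_le (Or.inl rfl)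

lemma lastIdx_eq_len_of_mem_result (hu : u ∈ P.result) : P.lastIdx u = P.len := by
  by_contra hne
  have hle := P.lastIdx_le_len u
  exact (P.lastIdx_spec u).resolve_left hne (P.sets_antitone (by omega) le_rfl hu)

lemma lastIdx_lt_len (hu : u ∉ P.result) : P.lastIdx u < P.len := by
  by_contra! h
  exact hu (P.mem_sets_of_le_lastIdx h)

lemma notMem_sets_succ_lastIdx (hu : u ∉ P.result) : u ∉ P.sets (P.lastIdx u + 1) :=
  (P.lastIdx_spec u).resolve_left (P.lastIdx_lt_len hu).ne

lemma prunedAt_lastIdx (hu : u ∉ P.result) (hpu : T.parent u ∈ P.result) :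
    P.prunedAt (P.lastIdx u) = u := by
  have hi := P.lastIdx_lt_len hu
  have hsucc := P.sets_succ hi
  have hanc : T.IsAncestor (P.prunedAt (P.lastIdx u)) u := by
    by_contra h
    exact P.notMem_sets_succ_lastIdx hu (hsucc ▸ ⟨P.mem_sets_of_le_lastIdx le_rfl, h⟩)
  by_contra hne
  have hpu' := hsucc ▸ P.sets_antitone hi le_rfl hpu
  exact hpu'.2 (isAncestor_parent_of_ne hanc hne)

lemma setOf_endTypeEq_eq_childrenOfType (v u : V) :
    {w | T.parent w = v ∧ w ≠ v ∧ w ∈ P.result ∧ P.EndTypeEq w u} =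
      childrenOfType G T P.result v (P.currentSet u) u := by
  ext w
  refine and_congr_right fun _ => and_congr_right fun _ => and_congr_right fun hw => ?_
  rw [EndTypeEq, currentSet, P.lastIdx_eq_len_of_mem_result hw]
  rfl

end PruningProcess

theorem kreduced_deleted_children_count_general {V : Type} (G : SimpleGraph V)
    (k : ℕ) (T : ElimTree V)
    (P : PruningProcess G T k) (u v : V)
    (hu : u ∉ P.result) (hv : v ∈ P.result)
    (hparent : T.parent u = v) :
    {w | T.parent w = v ∧ w ≠ v ∧ w ∈ P.result ∧ P.EndTypeEq w u}.ncard = k := by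
  set i := P.lastIdx u
  have hi : i < P.len := P.lastIdx_lt_len hu
  have hpi : P.prunedAt i = u := P.prunedAt_lastIdx hu (hparent ▸ hv)
  have huv : u ≠ v := fun h => hu (h ▸ hv)
  set A : ℕ → Set V := fun j => childrenOfType G T (P.sets j) v (P.currentSet u) u
  have hlower : (k : ℕ∞) ≤ (A P.len).encard := by
    refine Set.le_encard_of_forall_sdiff_singleton_subset hi (hpi ▸
      ⟨hparent, huv, P.mem_sets_of_le_lastIdx le_rfl, sameTypeIn_refl _ _⟩)
      (fun j hij hj => ?_) fun j _ hj => add_one_le_encard_childrenOfType (P.step j hj).1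
        (P.isParentClosed_sets hj.le)
    have hvS := P.sets_succ hj ▸ P.sets_antitone hj le_rfl hv
    simp only [A, P.sets_succ hj]
    refine childrenOfType_sdiff_subset hvS.2 ?_
    rw [← ElimTree.depth_of_parent_eq hparent huv, ← hpi]
    exact P.depth_prunedAt_antitone hij hj
  have hupper : (A P.len).encard ≤ k :=
    encard_childrenOfType_le_of_forall_not_pruneStep P.halt (P.isParentClosed_sets le_rfl)
  rw [P.setOf_endTypeEq_eq_childrenOfType, Set.ncard_def]
  exact congrArg ENat.toNat (le_antisymm hupper hlower) |>.trans (ENat.toNat_natCast k)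

/-- Let `G` be a graph with a `t`-model `T`, `k` an integer, and `H` a
`k`-reduced graph of `G` obtained via valid prunings from `T`. If `u` is a deleted
vertex whose parent `v` in `T` belongs to `H`, then exactly `k` children of `v` in `T`
belonging to `H` have end type equal to the end type of `u`. -/
theorem kreduced_deleted_children_count {V : Type} [Fintype V] (G : SimpleGraph V)
    (t k : ℕ) (T : ElimTree V) (hT : IsModelOfDepth T G t)
    (P : PruningProcess G T k) (u v : V)
    (hu : u ∉ P.result) (hv : v ∈ P.result)
    (hparent : T.parent u = v) (hne : u ≠ v) :
    {w | T.parent w = v ∧ w ≠ v ∧ w ∈ P.result ∧ P.EndTypeEq w u}.ncard = k :=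
  kreduced_deleted_children_count_general G k T P u v hu hv hparent
end
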